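/- arXiv:2601.14789 — 3 statements merged into one kernel-verified Lean document; each statement's English description precedes it below -/
import Mathlib

section
/- Let d ≥ 1 and N ≥ 1 be integers. There exists a finite set B of N-qudit product states (unit vectors of product form in the N-qudit Hilbert space) with cardinality |B| ≤ exp(2·d·N·(ln N + 3)), such that for every N-qudit pure state ψ, the supremum over all product states u of |⟨u, ψ⟩| is at most 2 · max_{v ∈ B} |⟨v, ψ⟩|. -/
open scoped ComplexInnerProductSpace

/-- An `N`-qudit product state (local dimension `d`): a vector of the form
`u x = ∏ i, f i (x i)` where each local vector `f i : Fin d → ℂ` is a unit vector. -/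
def IsProductState (d N : ℕ) (u : EuclideanSpace ℂ (Fin N → Fin d)) : Prop :=
  ∃ f : Fin N → Fin d → ℂ,
    (∀ i, ∑ a, ‖f i a‖ ^ 2 = 1) ∧ ∀ x, u x = ∏ i, f i (x i)


section ProductNetAux

open Finset Metric Module

noncomputable section

namespace PNet

set_option maxHeartbeats 2000000


theorem card_le_of_sep (d : ℕ) (δ : ℝ) (hδ : 0 < δ)
    (s : Finset (EuclideanSpace ℂ (Fin d)))
    (hs : ∀ c ∈ s, ‖c‖ ≤ 1)
    (h : ∀ c ∈ s, ∀ e ∈ s, c ≠ e → δ ≤ ‖c - e‖) :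
    (s.card : ℝ) ≤ ((2 + δ) / δ) ^ (2 * d) := by
  have frank : finrank ℝ (EuclideanSpace ℂ (Fin d)) = 2 * d := by
    have h := Module.finrank_mul_finrank ℝ ℂ (EuclideanSpace ℂ (Fin d))
    rw [finrank_euclideanSpace, Complex.finrank_real_complex, Fintype.card_fin] at h
    omega
  borelize (EuclideanSpace ℂ (Fin d))
  set μ : MeasureTheory.Measure (EuclideanSpace ℂ (Fin d)) := MeasureTheory.Measure.addHaar
    with hμ
  set δ' : ℝ := δ / 2 with hδ'
  set ρ : ℝ := 1 + δ / 2 with hρ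
  have δ'pos : 0 < δ' := by positivity
  have ρpos : 0 < ρ := by positivity
  set A := ⋃ c ∈ s, ball (c : EuclideanSpace ℂ (Fin d)) δ' with hA
  have D : Set.Pairwise (s : Set (EuclideanSpace ℂ (Fin d)))
      (Function.onFun Disjoint fun c => ball (c : EuclideanSpace ℂ (Fin d)) δ') := by
    rintro c hc e he hce
    apply ball_disjoint_ball
    rw [dist_eq_norm]
    have := h c hc e he hce
    linarith
  have A_subset : A ⊆ ball (0 : EuclideanSpace ℂ (Fin d)) ρ := by
    refine Set.iUnion₂_subset fun x hx => ?_
    apply ball_subset_ball'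
    calc δ' + dist x 0 ≤ δ' + 1 := by
          rw [dist_zero_right]; exact add_le_add le_rfl (hs x hx)
      _ = ρ := by rw [hρ, hδ']; ring
  have I :
      (s.card : ENNReal) * ENNReal.ofReal (δ' ^ (2 * d)) * μ (ball 0 1) ≤
        ENNReal.ofReal (ρ ^ (2 * d)) * μ (ball 0 1) :=
    calc
      (s.card : ENNReal) * ENNReal.ofReal (δ' ^ (2 * d)) * μ (ball 0 1) = μ A := by
        rw [hA, MeasureTheory.measure_biUnion_finset D fun c _ => measurableSet_ball]
        simp only [μ.addHaar_ball_of_pos _ δ'pos, frank]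
        simp only [Finset.sum_const, nsmul_eq_mul, mul_assoc]
      _ ≤ μ (ball (0 : EuclideanSpace ℂ (Fin d)) ρ) := MeasureTheory.measure_mono A_subset
      _ = ENNReal.ofReal (ρ ^ (2 * d)) * μ (ball 0 1) := by
        simp only [μ.addHaar_ball_of_pos _ ρpos, frank]
  have J : (s.card : ENNReal) * ENNReal.ofReal (δ' ^ (2 * d)) ≤
      ENNReal.ofReal (ρ ^ (2 * d)) :=
    (ENNReal.mul_le_mul_iff_left (measure_ball_pos _ _ zero_lt_one).ne'
      MeasureTheory.measure_ball_lt_top.ne).1 I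
  have K : (s.card : ℝ) * δ' ^ (2 * d) ≤ ρ ^ (2 * d) := by
    have h2 := ENNReal.toReal_le_of_le_ofReal (pow_nonneg ρpos.le _) J
    rw [ENNReal.toReal_mul, ENNReal.toReal_ofReal (pow_nonneg δ'pos.le _)] at h2
    simpa using h2
  rw [div_pow, le_div_iff₀ (by positivity)]
  calc (s.card : ℝ) * δ ^ (2*d) = (s.card : ℝ) * δ' ^ (2*d) * 2 ^ (2*d) := by
        rw [hδ', div_pow, mul_assoc, div_mul_eq_mul_div, mul_div_assoc,
          div_self (by positivity : ((2:ℝ))^(2*d) ≠ 0), mul_one]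
    _ ≤ ρ ^ (2*d) * 2 ^ (2*d) := mul_le_mul_of_nonneg_right K (by positivity)
    _ = (2 + δ)^(2*d) := by rw [← mul_pow]; congr 1; rw [hρ]; ring


theorem exists_net (d : ℕ) (δ : ℝ) (hδ : 0 < δ) :
    ∃ S : Finset (EuclideanSpace ℂ (Fin d)), (∀ v ∈ S, ‖v‖ = 1) ∧
      (S.card : ℝ) ≤ ((2 + δ) / δ) ^ (2 * d) ∧
      ∀ u : EuclideanSpace ℂ (Fin d), ‖u‖ = 1 → ∃ v ∈ S, ‖u - v‖ ≤ δ := by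
  classical
  set Good : Finset (EuclideanSpace ℂ (Fin d)) → Prop := fun s =>
    (∀ v ∈ s, ‖v‖ = 1) ∧ ∀ c ∈ s, ∀ e ∈ s, c ≠ e → δ ≤ ‖c - e‖ with hGood
  have hbound : ∀ s, Good s → (s.card : ℝ) ≤ ((2 + δ) / δ) ^ (2 * d) := fun s hs =>
    card_le_of_sep d δ hδ s (fun c hc => (hs.1 c hc).le) hs.2
  set C : Set ℕ := {n | ∃ s, Good s ∧ s.card = n} with hC
  have hCne : C.Nonempty := ⟨0, ∅, ⟨by simp, by simp⟩, rfl⟩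
  have hCbdd : BddAbove C := by
    refine ⟨Nat.floor (((2 + δ) / δ) ^ (2 * d)), ?_⟩
    rintro n ⟨s, hs, rfl⟩
    exact Nat.le_floor (hbound s hs)
  obtain ⟨S, hSgood, hScard⟩ : ∃ s, Good s ∧ s.card = sSup C := Nat.sSup_mem hCne hCbdd
  refine ⟨S, hSgood.1, hbound S hSgood, ?_⟩
  intro u hu
  by_contra hcon
  push_neg at hcon
  have husep : ∀ v ∈ S, δ < ‖u - v‖ := fun v hv => by
    have := hcon v hv
    rw [← dist_eq_norm] at *
    linarith [this]
  have huS : u ∉ S := fun huS => by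
    have := husep u huS; simp at this; linarith
  have hGood' : Good (insert u S) := by
    constructor
    · intro v hv
      rcases Finset.mem_insert.mp hv with rfl | hv
      · exact hu
      · exact hSgood.1 v hv
    · intro c hc e he hce
      rcases Finset.mem_insert.mp hc with hcu | hc
      · rcases Finset.mem_insert.mp he with heu | he
        · exact absurd (hcu.trans heu.symm) hce
        · rw [hcu]; exact (husep e he).le
      · rcases Finset.mem_insert.mp he with heu | he
        · rw [heu, norm_sub_rev]; exact (husep c hc).le
        · exact hSgood.2 c hc e he hce
  have : S.card + 1 ≤ sSup C := by
    have hmem : S.card + 1 ∈ C := ⟨insert u S, hGood', by rw [Finset.card_insert_of_notMem huS]⟩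
    exact le_csSup hCbdd hmem
  omega



def P (d N : ℕ) (f : Fin N → Fin d → ℂ) : EuclideanSpace ℂ (Fin N → Fin d) :=
  WithLp.toLp 2 (fun x => ∏ i, f i (x i))

lemma P_apply {d N : ℕ} (f : Fin N → Fin d → ℂ) (x : Fin N → Fin d) :
    P d N f x = ∏ i, f i (x i) := rfl

lemma eucl_norm_eq_one_iff {ι : Type*} [Fintype ι] (v : EuclideanSpace ℂ ι) :
    ‖v‖ = 1 ↔ ∑ i, ‖v i‖^2 = 1 := by
  rw [EuclideanSpace.norm_eq, Real.sqrt_eq_one]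

lemma P_norm {d N : ℕ} (f : Fin N → Fin d → ℂ) (hf : ∀ i, ∑ a, ‖f i a‖^2 = 1) :
    ‖P d N f‖ = 1 := by
  rw [eucl_norm_eq_one_iff]
  have h1 : ∀ x : Fin N → Fin d, ‖∏ i, f i (x i)‖^2 = ∏ i, ‖f i (x i)‖^2 := by
    intro x; rw [norm_prod, ← Finset.prod_pow]
  have h2 := Finset.prod_univ_sum (fun _ : Fin N => (univ : Finset (Fin d)))
      (fun i a => ‖f i a‖^2)
  show ∑ x : Fin N → Fin d, ‖∏ i, f i (x i)‖^2 = 1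
  simp_rw [h1]
  rw [← Fintype.piFinset_univ, ← h2]
  simp only [hf, Finset.prod_const_one]

lemma isProductState_P {d N : ℕ} (f : Fin N → Fin d → ℂ) (hf : ∀ i, ∑ a, ‖f i a‖^2 = 1) :
    IsProductState d N (P d N f) := ⟨f, hf, fun _ => rfl⟩

lemma isProductState_norm {d N : ℕ} {u : EuclideanSpace ℂ (Fin N → Fin d)}
    (hu : IsProductState d N u) : ‖u‖ = 1 := by
  obtain ⟨f, hf, hfu⟩ := hu
  have : u = P d N f := by ext x; exact hfu x
  rw [this]; exact P_norm f hf

def mix (d N : ℕ) (f g : Fin N → Fin d → ℂ) (k : ℕ) : EuclideanSpace ℂ (Fin N → Fin d) :=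
  P d N (fun i => if (i : ℕ) < k then g i else f i)

/-- key telescoping bound -/
lemma tele {d N : ℕ} (ψ : EuclideanSpace ℂ (Fin N → Fin d))
    (f g : Fin N → Fin d → ℂ)
    (hf : ∀ i, ∑ a, ‖f i a‖^2 = 1) (hg : ∀ i, ∑ a, ‖g i a‖^2 = 1)
    (M : ℝ) (hM : ∀ u, IsProductState d N u → ‖⟪u, ψ⟫‖ ≤ M) :
    ‖⟪P d N f, ψ⟫‖ ≤ ‖⟪P d N g, ψ⟫‖ +
      ∑ i, Real.sqrt (∑ a, ‖f i a - g i a‖^2) * M := by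
  classical
  have hM0 : 0 ≤ M := le_trans (norm_nonneg _) (hM _ (isProductState_P f hf))
  set T : ℕ → EuclideanSpace ℂ (Fin N → Fin d) := mix d N f g with hTdef
  have hTapp : ∀ k x, T k x = ∏ i : Fin N, (if (i:ℕ) < k then g i else f i) (x i) := fun _ _ => rfl
  have hT0 : T 0 = P d N f := by
    ext x
    rw [hTapp, P_apply]
    exact Finset.prod_congr rfl fun i _ => by simp
  have hTN : T N = P d N g := by
    ext x
    rw [hTapp, P_apply]
    exact Finset.prod_congr rfl fun i _ => by simp [i.isLt]
  have step : ∀ k : Fin N,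
      ‖⟪T k - T (k+1), ψ⟫‖ ≤ Real.sqrt (∑ a, ‖f k a - g k a‖^2) * M := by
    intro k
    set c : ℝ := Real.sqrt (∑ a, ‖f k a - g k a‖^2) with hc
    have hc0 : 0 ≤ c := Real.sqrt_nonneg _
    by_cases hzero : c = 0
    · have hfg : f k = g k := by
        funext a
        have hsum0 : ∑ a, ‖f k a - g k a‖^2 = 0 :=
          le_antisymm (Real.sqrt_eq_zero'.mp hzero)
            (Finset.sum_nonneg fun a _ => by positivity)
        have h1 := (Finset.sum_eq_zero_iff_of_nonneg
          (fun a _ => by positivity : ∀ a ∈ univ, (0:ℝ) ≤ ‖f k a - g k a‖^2)).mp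
            hsum0 a (mem_univ a)
        have h2 : ‖f k a - g k a‖ = 0 := by nlinarith [norm_nonneg (f k a - g k a)]
        rw [norm_eq_zero] at h2
        exact sub_eq_zero.mp h2
      have hTeq : T (k : ℕ) = T ((k : ℕ) + 1) := by
        ext x
        rw [hTapp, hTapp]
        refine Finset.prod_congr rfl fun i _ => ?_
        by_cases hik : (i : ℕ) < (k : ℕ)
        · rw [if_pos hik, if_pos (by omega)]
        · by_cases hik' : (i : ℕ) = (k : ℕ)
          · have hik2 : i = k := Fin.ext hik'
            subst hik2
            rw [if_neg hik, if_pos (by omega), hfg]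
          · rw [if_neg hik, if_neg (by omega)]
      have : T (k:ℕ) - T ((k:ℕ)+1) = 0 := by rw [hTeq, sub_self]
      rw [this, inner_zero_left, norm_zero]
      positivity
    · have hcpos : 0 < c := lt_of_le_of_ne hc0 (Ne.symm hzero)
      set w : Fin d → ℂ := fun a => (c : ℂ)⁻¹ * (f k a - g k a) with hw
      set e : Fin N → Fin d → ℂ := fun i =>
        if (i : ℕ) < (k : ℕ) then g i else if i = k then w else f i with he
      have heunit : ∀ i, ∑ a, ‖e i a‖^2 = 1 := by
        intro i
        by_cases hik : (i : ℕ) < (k : ℕ)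
        · simp only [he, if_pos hik]; exact hg i
        · by_cases hik' : i = k
          · subst hik'
            simp only [he, hw, if_neg hik, eq_self_iff_true, if_true]
            have hna : ∀ a, ‖(c : ℂ)⁻¹ * (f i a - g i a)‖^2
                = (c⁻¹)^2 * ‖f i a - g i a‖^2 := by
              intro a
              rw [norm_mul, mul_pow]
              congr 2
              rw [norm_inv, Complex.norm_real, Real.norm_of_nonneg hc0]
            simp_rw [hna]
            rw [← Finset.mul_sum]
            have hcsq : c^2 = ∑ a, ‖f i a - g i a‖^2 := by
              rw [hc, Real.sq_sqrt (Finset.sum_nonneg fun a _ => by positivity)]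
            rw [← hcsq]
            field_simp
          · simp only [he, if_neg hik, if_neg hik']; exact hf i
      have hdiff : T (k:ℕ) - T ((k:ℕ)+1) = (c : ℂ) • P d N e := by
        ext x
        show T (k:ℕ) x - T ((k:ℕ)+1) x = (c:ℂ) * P d N e x
        rw [hTapp, hTapp, P_apply]
        rw [← Finset.mul_prod_erase univ
              (fun i : Fin N => (if (i:ℕ) < (k:ℕ) then g i else f i) (x i)) (mem_univ k),
            ← Finset.mul_prod_erase univ
              (fun i : Fin N => (if (i:ℕ) < (k:ℕ)+1 then g i else f i) (x i)) (mem_univ k),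
            ← Finset.mul_prod_erase univ (fun i : Fin N => e i (x i)) (mem_univ k)]
        have hcom1 : ∀ i ∈ univ.erase k,
            (if (i:ℕ) < (k:ℕ)+1 then g i else f i) (x i)
              = (if (i:ℕ) < (k:ℕ) then g i else f i) (x i) := by
          intro i hi
          have hik : (i : ℕ) ≠ (k : ℕ) :=
            fun hh => (Finset.ne_of_mem_erase hi) (Fin.ext hh)
          by_cases h1 : (i:ℕ) < (k:ℕ)
          · rw [if_pos h1, if_pos (by omega)]
          · rw [if_neg h1, if_neg (by omega)]
        have hcom2 : ∀ i ∈ univ.erase k,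
            e i (x i) = (if (i:ℕ) < (k:ℕ) then g i else f i) (x i) := by
          intro i hi
          have hik : i ≠ k := Finset.ne_of_mem_erase hi
          simp only [he, if_neg hik]
        rw [Finset.prod_congr rfl hcom1, Finset.prod_congr rfl hcom2]
        have hk1 : ¬ ((k:ℕ) < (k:ℕ)) := lt_irrefl _
        rw [if_neg hk1, if_pos (Nat.lt_succ_self _)]
        simp only [he, hw, if_neg hk1, eq_self_iff_true, if_true]
        have hcne : (c:ℂ) ≠ 0 := by exact_mod_cast hzero
        field_simp
      rw [show ((k:ℕ)+1 : ℕ) = ((k:ℕ)+1) from rfl] at hdiff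
      rw [hdiff, inner_smul_left, norm_mul, RCLike.norm_conj,
        Complex.norm_real, Real.norm_of_nonneg hc0]
      exact mul_le_mul_of_nonneg_left (hM _ (isProductState_P e heunit)) hc0
  have htel : T 0 - T N = ∑ k ∈ Finset.range N, (T k - T (k+1)) := by
    rw [Finset.sum_range_sub' (fun k => T k)]
  have hinner : ⟪T 0, ψ⟫ - ⟪T N, ψ⟫ = ∑ k ∈ Finset.range N, ⟪T k - T (k+1), ψ⟫ := by
    rw [← inner_sub_left, htel, sum_inner]
  have hbound : ‖⟪T 0, ψ⟫ - ⟪T N, ψ⟫‖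
      ≤ ∑ i, Real.sqrt (∑ a, ‖f i a - g i a‖^2) * M := by
    rw [hinner]
    refine le_trans (norm_sum_le _ _) ?_
    rw [← Fin.sum_univ_eq_sum_range (fun k => ‖⟪T k - T (k+1), ψ⟫‖) N]
    exact Finset.sum_le_sum fun i _ => step i
  have hsplit : ⟪P d N f, ψ⟫ = ⟪T N, ψ⟫ + (⟪T 0, ψ⟫ - ⟪T N, ψ⟫) := by rw [← hT0]; ring
  calc ‖⟪P d N f, ψ⟫‖ = ‖⟪T N, ψ⟫ + (⟪T 0, ψ⟫ - ⟪T N, ψ⟫)‖ := by rw [hsplit]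
    _ ≤ ‖⟪T N, ψ⟫‖ + ‖⟪T 0, ψ⟫ - ⟪T N, ψ⟫‖ := norm_add_le _ _
    _ ≤ ‖⟪P d N g, ψ⟫‖ + ∑ i, Real.sqrt (∑ a, ‖f i a - g i a‖^2) * M := by
        rw [hTN] at hbound ⊢
        exact add_le_add le_rfl hbound


end PNet

end

end ProductNetAux

section Main

open Finset

/-- **Lemma S2.** There is a finite set `B` of `N`-qudit product states with
`|B| ≤ exp(2dN(ln N + 3))` such that for every pure state `ψ` and every product state `u`,
`|⟨u, ψ⟩| ≤ 2 · max_{v ∈ B} |⟨v, ψ⟩|`. -/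
theorem exists_product_state_net (d N : ℕ) (hd : 1 ≤ d) (hN : 1 ≤ N) :
    ∃ B : Finset (EuclideanSpace ℂ (Fin N → Fin d)),
      (∀ v ∈ B, IsProductState d N v) ∧
      (B.card : ℝ) ≤ Real.exp (2 * d * N * (Real.log N + 3)) ∧
      ∀ ψ : EuclideanSpace ℂ (Fin N → Fin d), ‖ψ‖ = 1 →
        ∀ u : EuclideanSpace ℂ (Fin N → Fin d), IsProductState d N u →
          ∃ v ∈ B, ‖⟪u, ψ⟫‖ ≤ 2 * ‖⟪v, ψ⟫‖ := by
  classical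
  have hNpos : (0:ℝ) < N := by exact_mod_cast hN
  set δ : ℝ := 1/(2*N) with hδdef
  have hδpos : 0 < δ := by positivity
  obtain ⟨S, hSunit, hScard, hSnet⟩ := PNet.exists_net d δ hδpos
  have hSne : S.Nonempty := by
    obtain ⟨v, hv, -⟩ := hSnet (EuclideanSpace.single (⟨0, hd⟩ : Fin d) 1)
      (by rw [EuclideanSpace.norm_single]; simp)
    exact ⟨v, hv⟩
  set B : Finset (EuclideanSpace ℂ (Fin N → Fin d)) :=
    (Fintype.piFinset (fun _ : Fin N => S)).image
      (fun g => PNet.P d N (fun i a => g i a)) with hBdef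
  have hBprod : ∀ v ∈ B, IsProductState d N v := by
    intro v hv
    obtain ⟨g, hg, rfl⟩ := Finset.mem_image.mp hv
    exact ⟨fun i a => g i a,
      fun i => (PNet.eucl_norm_eq_one_iff _).mp (hSunit _ (Fintype.mem_piFinset.mp hg i)),
      fun _ => rfl⟩
  have hratio : (2 + δ)/δ = 4*N + 1 := by
    rw [hδdef]; field_simp; ring
  have hcard : (B.card : ℝ) ≤ Real.exp (2 * d * N * (Real.log N + 3)) := by
    have h1 : (B.card : ℕ) ≤ S.card ^ N := by
      refine le_trans (Finset.card_image_le) ?_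
      rw [Fintype.card_piFinset]
      simp
    have h2 : (B.card : ℝ) ≤ ((4*N+1) ^ (2*d)) ^ N := by
      calc (B.card : ℝ) ≤ ((S.card : ℝ)) ^ N := by exact_mod_cast h1
        _ ≤ (((2+δ)/δ) ^ (2*d)) ^ N :=
            pow_le_pow_left₀ (by positivity) hScard N
        _ = ((4*(N:ℝ)+1) ^ (2*d)) ^ N := by rw [hratio]
    have h3 : (4*(N:ℝ)+1) ≤ Real.exp (Real.log N + 3) := by
      rw [Real.exp_add, Real.exp_log hNpos]
      have he1 : (2.7182818283 : ℝ) < Real.exp 1 := Real.exp_one_gt_d9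
      have he3 : (5:ℝ) ≤ Real.exp 3 := by
        have h3e : Real.exp 3 = (Real.exp 1)^3 := by
          rw [← Real.exp_nat_mul]; norm_num
        have hcube : (2.7182818283:ℝ)^3 < (Real.exp 1)^3 :=
          pow_lt_pow_left₀ he1 (by norm_num) (by norm_num)
        rw [h3e]; nlinarith [hcube]
      have hN1 : (1:ℝ) ≤ N := by exact_mod_cast hN
      nlinarith [mul_le_mul_of_nonneg_right he3 (by linarith : (0:ℝ) ≤ (N:ℝ))]
    calc (B.card : ℝ) ≤ ((4*(N:ℝ)+1) ^ (2*d)) ^ N := h2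
      _ = (4*(N:ℝ)+1) ^ (2*d*N) := by rw [← pow_mul]
      _ ≤ (Real.exp (Real.log N + 3)) ^ (2*d*N) :=
          pow_le_pow_left₀ (by positivity) h3 _
      _ = Real.exp ((2*d*N : ℕ) * (Real.log N + 3)) := by rw [Real.exp_nat_mul]
      _ = Real.exp (2 * d * N * (Real.log N + 3)) := by push_cast; ring_nf
  refine ⟨B, hBprod, hcard, ?_⟩
  intro ψ hψ u hu
  set Sv : Set ℝ := {r | ∃ w, IsProductState d N w ∧ r = ‖⟪w, ψ⟫‖} with hSv
  have hbddSv : BddAbove Sv := by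
    refine ⟨1, ?_⟩
    rintro r ⟨w, hw, rfl⟩
    calc ‖⟪w, ψ⟫‖ ≤ ‖w‖ * ‖ψ‖ := norm_inner_le_norm w ψ
      _ = 1 := by rw [PNet.isProductState_norm hw, hψ, one_mul]
  have hneSv : Sv.Nonempty := ⟨_, u, hu, rfl⟩
  set M := sSup Sv with hMdef
  have hM : ∀ w, IsProductState d N w → ‖⟪w, ψ⟫‖ ≤ M :=
    fun w hw => le_csSup hbddSv ⟨w, hw, rfl⟩
  have hM0 : 0 ≤ M := le_trans (norm_nonneg _) (hM u hu)
  have hBne : B.Nonempty := by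
    obtain ⟨s0, hs0⟩ := hSne
    exact ⟨_, Finset.mem_image.mpr ⟨fun _ => s0,
      Fintype.mem_piFinset.mpr (fun _ => hs0), rfl⟩⟩
  set mB := B.sup' hBne (fun v => ‖⟪v, ψ⟫‖) with hmBdef
  have key : ∀ w, IsProductState d N w → ‖⟪w, ψ⟫‖ ≤ mB + (1/2) * M := by
    rintro w ⟨f, hf, hfw⟩
    have hw : w = PNet.P d N f := by ext x; exact hfw x
    have hch : ∀ i, ∃ v ∈ S, ‖(WithLp.toLp 2 (f i) : EuclideanSpace ℂ (Fin d)) - v‖ ≤ δ := by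
      intro i
      apply hSnet
      rw [PNet.eucl_norm_eq_one_iff]
      exact hf i
    choose g hgS hgnear using hch
    have hgunit : ∀ i, ∑ a, ‖g i a‖^2 = 1 :=
      fun i => (PNet.eucl_norm_eq_one_iff _).mp (hSunit _ (hgS i))
    have hB : PNet.P d N (fun i a => g i a) ∈ B :=
      Finset.mem_image.mpr ⟨g, Fintype.mem_piFinset.mpr hgS, rfl⟩
    have htele := PNet.tele ψ f (fun i a => g i a) hf hgunit M hM
    have hterm : ∀ i, Real.sqrt (∑ a, ‖f i a - g i a‖^2) ≤ δ := by
      intro i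
      have h1 := hgnear i
      rw [EuclideanSpace.norm_eq] at h1
      exact h1
    calc ‖⟪w, ψ⟫‖ = ‖⟪PNet.P d N f, ψ⟫‖ := by rw [hw]
      _ ≤ ‖⟪PNet.P d N (fun i a => g i a), ψ⟫‖
          + ∑ i, Real.sqrt (∑ a, ‖f i a - g i a‖^2) * M := htele
      _ ≤ mB + ∑ i : Fin N, δ * M := by
          exact add_le_add (Finset.le_sup' (fun v => ‖⟪v, ψ⟫‖) hB)
            (Finset.sum_le_sum fun i _ =>
              mul_le_mul_of_nonneg_right (hterm i) hM0)
      _ = mB + (1/2) * M := by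
          have hNne : (N:ℝ) ≠ 0 := ne_of_gt hNpos
          rw [Finset.sum_const, card_univ, Fintype.card_fin, nsmul_eq_mul, hδdef]
          congr 1
          field_simp
  have hMle : M ≤ mB + (1/2) * M := by
    refine csSup_le hneSv ?_
    rintro r ⟨w, hw, rfl⟩
    exact key w hw
  have hM2 : M ≤ 2 * mB := by linarith
  obtain ⟨v0, hv0B, hv0⟩ := Finset.exists_mem_eq_sup' hBne (fun v => ‖⟪v, ψ⟫‖)
  refine ⟨v0, hv0B, ?_⟩
  calc ‖⟪u, ψ⟫‖ ≤ M := hM u hu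
    _ ≤ 2 * mB := hM2
    _ = 2 * ‖⟪v0, ψ⟫‖ := by rw [hmBdef, hv0]

end Main
end

section
/- Let D ≥ 1, let σ be the unitarily invariant (uniform) probability measure on the unit sphere of ℂ^D, and let v be a fixed unit vector in ℂ^D. Then for every real α ≥ 1, σ{ψ : |⟨v, ψ⟩|² ≥ 4α/D} ≤ 2 · exp(−C₁·α), where C₁ = 2/(9·π³·ln 2). -/
open MeasureTheory
open scoped ComplexInnerProductSpace ENNReal

namespace TailBoundAux

noncomputable section

/-- sign associated to a boolean -/
def rsgn (b : Bool) : ℝ := if b then 1 else -1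

lemma rsgn_sq (b : Bool) : rsgn b ^ 2 = 1 := by cases b <;> simp [rsgn]

lemma abs_rsgn (b : Bool) : |rsgn b| = 1 := by cases b <;> simp [rsgn]

/-- MGF factorization over independent signs. -/
lemma sum_exp_eq_prod {n : ℕ} (c : Fin n → ℝ) :
    ∑ ε : Fin n → Bool, Real.exp (∑ i, rsgn (ε i) * c i)
      = ∏ i, (Real.exp (c i) + Real.exp (-c i)) := by
  classical
  have h : ∀ ε : Fin n → Bool, Real.exp (∑ i, rsgn (ε i) * c i)
      = ∏ i, (fun (i : Fin n) (b : Bool) => Real.exp (rsgn b * c i)) i (ε i) := by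
    intro ε
    rw [Real.exp_sum]
  simp_rw [h]
  rw [← Fintype.prod_sum (fun (i : Fin n) (b : Bool) => Real.exp (rsgn b * c i))]
  refine Finset.prod_congr rfl fun i _ => ?_
  rw [Fintype.sum_bool]
  simp [rsgn]

lemma pow_le_exp_add (k : ℕ) (t : ℝ) :
    t ^ (2 * k) ≤ (Nat.factorial (2 * k))  * (Real.exp t + Real.exp (-t)) := by
  have habs : t ^ (2 * k) = |t| ^ (2 * k) := by
    rw [(even_two_mul k).pow_abs]
  have h1 : |t| ^ (2 * k) / (Nat.factorial (2 * k))  ≤ Real.exp |t| := by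
    calc |t| ^ (2 * k) / (Nat.factorial (2 * k)) 
        ≤ ∑ i ∈ Finset.range (2 * k + 1), |t| ^ i / (Nat.factorial i) := by
          refine Finset.single_le_sum (f := fun i => |t| ^ i / (Nat.factorial i)) ?_ ?_
          · intro i _; positivity
          · simp
      _ ≤ Real.exp |t| := Real.sum_le_exp_of_nonneg (abs_nonneg t) _
  have h2 : Real.exp |t| ≤ Real.exp t + Real.exp (-t) := by
    rcases abs_cases t with ⟨h, _⟩ | ⟨h, _⟩
    · rw [h]; nlinarith [Real.exp_pos (-t)]
    · rw [h]; nlinarith [Real.exp_pos t]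
  have hfac : (0:ℝ) < (Nat.factorial (2 * k))  := by positivity
  rw [habs]
  calc |t| ^ (2 * k) = (Nat.factorial (2 * k))  * (|t| ^ (2 * k) / (Nat.factorial (2 * k)) ) := by field_simp
    _ ≤ (Nat.factorial (2 * k))  * (Real.exp t + Real.exp (-t)) := by
        exact mul_le_mul_of_nonneg_left (h1.trans h2) hfac.le

/-- Real Khintchine-type estimate via subgaussian MGF. -/
lemma khintchine_real {n : ℕ} (k : ℕ) (hk : 1 ≤ k) (x : Fin n → ℝ)
    (hx : ∑ i, x i ^ 2 ≤ 1) :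
    ∑ ε : Fin n → Bool, (∑ i, rsgn (ε i) * x i) ^ (2 * k)
      ≤ 2 ^ n * (2 * (Nat.factorial (2 * k))  * Real.exp k / (2 * k) ^ k) := by
  classical
  set l : ℝ := Real.sqrt (2 * k) with hl
  have hl2 : l ^ 2 = 2 * k := Real.sq_sqrt (by positivity)
  have hlpos : 0 < l := Real.sqrt_pos.2 (by positivity)
  have hkpos : (0:ℝ) < (2 * k : ℝ) ^ k := by positivity
  -- pointwise bound
  have hpt : ∀ ε : Fin n → Bool,
      (∑ i, rsgn (ε i) * x i) ^ (2 * k)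
        ≤ (Nat.factorial (2 * k))  / (2 * k) ^ k
            * (Real.exp (∑ i, rsgn (ε i) * (l * x i))
               + Real.exp (∑ i, rsgn (ε i) * (-(l * x i)))) := by
    intro ε
    set S : ℝ := ∑ i, rsgn (ε i) * x i with hS
    have hlS : ∑ i, rsgn (ε i) * (l * x i) = l * S := by
      rw [hS, Finset.mul_sum]; refine Finset.sum_congr rfl fun i _ => by ring
    have hlS' : ∑ i, rsgn (ε i) * (-(l * x i)) = -(l * S) := by
      rw [hS, Finset.mul_sum, neg_eq_neg_one_mul, Finset.mul_sum]
      refine Finset.sum_congr rfl fun i _ => by ring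
    rw [hlS, hlS']
    have h1 : (l * S) ^ (2 * k) ≤ (Nat.factorial (2 * k))  * (Real.exp (l * S) + Real.exp (-(l * S))) :=
      pow_le_exp_add k (l * S)
    have h2 : (l * S) ^ (2 * k) = (2 * k) ^ k * S ^ (2 * k) := by
      rw [mul_pow, pow_mul, hl2]
    rw [h2] at h1
    rw [div_mul_eq_mul_div, le_div_iff₀ hkpos]
    linarith [h1]
  calc ∑ ε : Fin n → Bool, (∑ i, rsgn (ε i) * x i) ^ (2 * k)
      ≤ ∑ ε : Fin n → Bool, ((Nat.factorial (2 * k))  / (2 * k) ^ k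
            * (Real.exp (∑ i, rsgn (ε i) * (l * x i))
               + Real.exp (∑ i, rsgn (ε i) * (-(l * x i))))) :=
        Finset.sum_le_sum fun ε _ => hpt ε
    _ = (Nat.factorial (2 * k))  / (2 * k) ^ k
          * (∑ ε : Fin n → Bool, Real.exp (∑ i, rsgn (ε i) * (l * x i))
             + ∑ ε : Fin n → Bool, Real.exp (∑ i, rsgn (ε i) * (-(l * x i)))) := by
        rw [← Finset.mul_sum, Finset.sum_add_distrib]
    _ = (Nat.factorial (2 * k))  / (2 * k) ^ k
          * (∏ i, (Real.exp (l * x i) + Real.exp (-(l * x i)))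
             + ∏ i, (Real.exp (-(l * x i)) + Real.exp (-(-(l * x i))))) := by
        rw [sum_exp_eq_prod (fun i => l * x i), sum_exp_eq_prod (fun i => -(l * x i))]
    _ ≤ 2 ^ n * (2 * (Nat.factorial (2 * k))  * Real.exp k / (2 * k) ^ k) := by
        have hprod : ∀ s : ℝ, s = 1 ∨ s = -1 → True := fun _ _ => trivial
        have key : ∏ i, (Real.exp (l * x i) + Real.exp (-(l * x i)))
            ≤ 2 ^ n * Real.exp k := by
          have hstep : ∀ i : Fin n,
              Real.exp (l * x i) + Real.exp (-(l * x i))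
                ≤ 2 * Real.exp ((l * x i) ^ 2 / 2) := by
            intro i
            have := Real.cosh_le_exp_half_sq (l * x i)
            rw [Real.cosh_eq] at this
            linarith
          calc ∏ i, (Real.exp (l * x i) + Real.exp (-(l * x i)))
              ≤ ∏ i, (2 * Real.exp ((l * x i) ^ 2 / 2)) := by
                refine Finset.prod_le_prod (fun i _ => by positivity)
                  (fun i _ => hstep i)
            _ = 2 ^ n * Real.exp (∑ i, (l * x i) ^ 2 / 2) := by
                rw [Finset.prod_mul_distrib, Finset.prod_const, Real.exp_sum]
                simp [Finset.card_univ]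
            _ ≤ 2 ^ n * Real.exp k := by
                have : ∑ i, (l * x i) ^ 2 / 2 ≤ (k : ℝ) := by
                  have : ∑ i, (l * x i) ^ 2 / 2 = (l ^ 2 / 2) * ∑ i, x i ^ 2 := by
                    rw [Finset.mul_sum]
                    refine Finset.sum_congr rfl fun i _ => by ring
                  rw [this, hl2]
                  nlinarith [hx, Finset.sum_nonneg
                    (fun i (_ : i ∈ Finset.univ) => sq_nonneg (x i))]
                exact mul_le_mul_of_nonneg_left (Real.exp_le_exp.2 this) (by positivity)
        have key2 : ∏ i, (Real.exp (-(l * x i)) + Real.exp (-(-(l * x i))))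
            ≤ 2 ^ n * Real.exp k := by
          have : ∀ i : Fin n, Real.exp (-(l * x i)) + Real.exp (-(-(l * x i)))
              = Real.exp (l * x i) + Real.exp (-(l * x i)) := by
            intro i; rw [neg_neg]; ring
          simp_rw [this]
          exact key
        have hfpos : (0:ℝ) ≤ (Nat.factorial (2 * k))  / (2 * k) ^ k := by positivity
        calc (Nat.factorial (2 * k))  / (2 * k) ^ k
              * (∏ i, (Real.exp (l * x i) + Real.exp (-(l * x i)))
                 + ∏ i, (Real.exp (-(l * x i)) + Real.exp (-(-(l * x i)))))
            ≤ (Nat.factorial (2 * k))  / (2 * k) ^ k * (2 ^ n * Real.exp k + 2 ^ n * Real.exp k) :=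
              mul_le_mul_of_nonneg_left (by linarith) hfpos
          _ = 2 ^ n * (2 * (Nat.factorial (2 * k))  * Real.exp k / (2 * k) ^ k) := by ring

/-- Complex Khintchine-type estimate. -/
lemma khintchine_complex {n : ℕ} (k : ℕ) (hk : 1 ≤ k) (ψ : Fin n → ℂ)
    (hψ : ∑ i, ‖ψ i‖ ^ 2 ≤ 1) :
    ∑ ε : Fin n → Bool, ‖∑ i, (rsgn (ε i) : ℂ) * ψ i‖ ^ (2 * k)
      ≤ 2 ^ n * (2 ^ (k + 2) * (Nat.factorial (2 * k))  * Real.exp k / (2 * k) ^ k) := by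
  classical
  set a : Fin n → ℝ := fun i => (ψ i).re with ha
  set b : Fin n → ℝ := fun i => (ψ i).im with hb
  have hnorm : ∀ i, ‖ψ i‖ ^ 2 = a i ^ 2 + b i ^ 2 := by
    intro i
    rw [ha, hb, Complex.sq_norm, Complex.normSq_apply]
    ring
  have hasum : ∑ i, a i ^ 2 ≤ 1 := by
    refine le_trans ?_ hψ
    refine Finset.sum_le_sum fun i _ => ?_
    rw [hnorm i]; nlinarith [sq_nonneg (b i)]
  have hbsum : ∑ i, b i ^ 2 ≤ 1 := by
    refine le_trans ?_ hψ
    refine Finset.sum_le_sum fun i _ => ?_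
    rw [hnorm i]; nlinarith [sq_nonneg (a i)]
  have hpt : ∀ ε : Fin n → Bool,
      ‖∑ i, (rsgn (ε i) : ℂ) * ψ i‖ ^ (2 * k)
        ≤ 2 ^ k * ((∑ i, rsgn (ε i) * a i) ^ (2 * k)
                   + (∑ i, rsgn (ε i) * b i) ^ (2 * k)) := by
    intro ε
    set c : ℂ := ∑ i, (rsgn (ε i) : ℂ) * ψ i with hc
    have hre : c.re = ∑ i, rsgn (ε i) * a i := by
      rw [hc, Complex.re_sum]
      refine Finset.sum_congr rfl fun i _ => by
        simp [ha, Complex.mul_re, Complex.ofReal_re, Complex.ofReal_im]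
    have him : c.im = ∑ i, rsgn (ε i) * b i := by
      rw [hc, Complex.im_sum]
      refine Finset.sum_congr rfl fun i _ => by
        simp [hb, Complex.mul_im, Complex.ofReal_re, Complex.ofReal_im]
    have hnc : ‖c‖ ^ 2 = c.re ^ 2 + c.im ^ 2 := by
      rw [Complex.sq_norm, Complex.normSq_apply]
      ring
    have h1 : ‖c‖ ^ (2 * k) = (c.re ^ 2 + c.im ^ 2) ^ k := by
      rw [pow_mul, hnc]
    have h2 : (c.re ^ 2 + c.im ^ 2) ^ k ≤ 2 ^ k * ((c.re ^ 2) ^ k + (c.im ^ 2) ^ k) := by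
      have hA : (0:ℝ) ≤ c.re ^ 2 := sq_nonneg _
      have hB : (0:ℝ) ≤ c.im ^ 2 := sq_nonneg _
      calc (c.re ^ 2 + c.im ^ 2) ^ k
          ≤ (2 * max (c.re ^ 2) (c.im ^ 2)) ^ k := by
            refine pow_le_pow_left₀ (by positivity) ?_ k
            rcases le_total (c.re ^ 2) (c.im ^ 2) with h | h
            · rw [max_eq_right h]; linarith
            · rw [max_eq_left h]; linarith
        _ = 2 ^ k * (max (c.re ^ 2) (c.im ^ 2)) ^ k := by rw [mul_pow]
        _ ≤ 2 ^ k * ((c.re ^ 2) ^ k + (c.im ^ 2) ^ k) := by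
            refine mul_le_mul_of_nonneg_left ?_ (by positivity)
            rcases le_total (c.re ^ 2) (c.im ^ 2) with h | h
            · rw [max_eq_right h]; nlinarith [pow_nonneg hA k]
            · rw [max_eq_left h]; nlinarith [pow_nonneg hB k]
    have h3 : (c.re ^ 2) ^ k = (∑ i, rsgn (ε i) * a i) ^ (2 * k) := by
      rw [hre, ← pow_mul]
    have h4 : (c.im ^ 2) ^ k = (∑ i, rsgn (ε i) * b i) ^ (2 * k) := by
      rw [him, ← pow_mul]
    rw [h1, ← h3, ← h4]
    exact h2
  calc ∑ ε : Fin n → Bool, ‖∑ i, (rsgn (ε i) : ℂ) * ψ i‖ ^ (2 * k)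
      ≤ ∑ ε : Fin n → Bool, 2 ^ k * ((∑ i, rsgn (ε i) * a i) ^ (2 * k)
                   + (∑ i, rsgn (ε i) * b i) ^ (2 * k)) :=
        Finset.sum_le_sum fun ε _ => hpt ε
    _ = 2 ^ k * ((∑ ε : Fin n → Bool, (∑ i, rsgn (ε i) * a i) ^ (2 * k))
                 + ∑ ε : Fin n → Bool, (∑ i, rsgn (ε i) * b i) ^ (2 * k)) := by
        rw [← Finset.mul_sum, Finset.sum_add_distrib]
    _ ≤ 2 ^ k * (2 ^ n * (2 * (Nat.factorial (2 * k))  * Real.exp k / (2 * k) ^ k)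
                 + 2 ^ n * (2 * (Nat.factorial (2 * k))  * Real.exp k / (2 * k) ^ k)) := by
        refine mul_le_mul_of_nonneg_left ?_ (by positivity)
        exact add_le_add (khintchine_real k hk a hasum) (khintchine_real k hk b hbsum)
    _ = 2 ^ n * (2 ^ (k + 2) * (Nat.factorial (2 * k))  * Real.exp k / (2 * k) ^ k) := by
        rw [pow_add]; ring

end

end TailBoundAux

open TailBoundAux

/-- Existence of a unitary carrying one unit vector to another. -/
lemma exists_unitary_map (D : ℕ) (hD : 1 ≤ D)
    (a b : EuclideanSpace ℂ (Fin D)) (ha : ‖a‖ = 1) (hb : ‖b‖ = 1) :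
    ∃ U : EuclideanSpace ℂ (Fin D) ≃ₗᵢ[ℂ] EuclideanSpace ℂ (Fin D), U a = b := by
  classical
  have hcard : Module.finrank ℂ (EuclideanSpace ℂ (Fin D)) = Fintype.card (Fin D) := by
    simp [finrank_euclideanSpace]
  set i0 : Fin D := ⟨0, hD⟩
  have horth : ∀ c : EuclideanSpace ℂ (Fin D), ‖c‖ = 1 →
      Orthonormal ℂ (({i0} : Set (Fin D)).restrict (fun _ => c)) := by
    intro c hc
    rw [orthonormal_iff_ite]
    intro i j
    have hij : i = j := Subsingleton.elim i j
    subst hij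
    simp [Set.restrict, inner_self_eq_norm_sq_to_K, hc]
  obtain ⟨b₁, hb₁⟩ := (horth a ha).exists_orthonormalBasis_extension_of_card_eq hcard
  obtain ⟨b₂, hb₂⟩ := (horth b hb).exists_orthonormalBasis_extension_of_card_eq hcard
  refine ⟨b₁.repr.trans b₂.repr.symm, ?_⟩
  have h1 : b₁ i0 = a := hb₁ i0 rfl
  have h2 : b₂ i0 = b := hb₂ i0 rfl
  rw [LinearIsometryEquiv.trans_apply, ← h1, OrthonormalBasis.repr_self,
    OrthonormalBasis.repr_symm_single, h2]


lemma final_numeric_trivial (α : ℝ) (hα1 : 1 ≤ α) (hα : α ≤ 66) :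
    (1:ℝ) ≤ 2 * Real.exp (-(2 / (9 * Real.pi ^ 3 * Real.log 2)) * α) := by
  have hπ : (3.141592:ℝ) < Real.pi := Real.pi_gt_d6
  have hlog : (0.6931471803:ℝ) < Real.log 2 := Real.log_two_gt_d9
  have hπ3 : (31.006:ℝ) ≤ Real.pi ^ 3 := by
    calc (31.006:ℝ) ≤ 3.141592 ^ 3 := by norm_num
      _ ≤ Real.pi ^ 3 := by
        refine pow_le_pow_left₀ (by norm_num) hπ.le 3
  have hden : (0:ℝ) < 9 * Real.pi ^ 3 * Real.log 2 := by nlinarith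
  have hC : 2 / (9 * Real.pi ^ 3 * Real.log 2) * α ≤ Real.log 2 := by
    rw [div_mul_eq_mul_div, div_le_iff₀ hden]
    nlinarith
  have h1 : Real.exp (-Real.log 2) ≤ Real.exp (-(2 / (9 * Real.pi ^ 3 * Real.log 2)) * α) := by
    apply Real.exp_le_exp.2
    nlinarith
  have h2 : Real.exp (-Real.log 2) = 1/2 := by
    rw [Real.exp_neg, Real.exp_log (by norm_num : (0:ℝ) < 2)]
    norm_num
  nlinarith [h1, h2]

lemma final_numeric (α : ℝ) (hα : 66 ≤ α) :
    (2:ℝ) ^ (⌊α/6⌋₊ + 2) * (Nat.factorial (2 * ⌊α/6⌋₊)) * Real.exp (⌊α/6⌋₊ : ℕ) /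
      ((2 * (⌊α/6⌋₊:ℝ)) ^ ⌊α/6⌋₊ * (4 * α) ^ ⌊α/6⌋₊)
      ≤ 2 * Real.exp (-(2 / (9 * Real.pi ^ 3 * Real.log 2)) * α) := by
  set k := ⌊α/6⌋₊ with hkdef
  have hαpos : (0:ℝ) < α := by linarith
  have hk6 : (k:ℝ) ≤ α/6 := Nat.floor_le (by positivity)
  have hk6' : α/6 < (k:ℝ) + 1 := Nat.lt_floor_add_one _
  have hk11 : (11:ℕ) ≤ k := Nat.le_floor (by push_cast; linarith)
  have hkpos : (0:ℝ) < (k:ℝ) := by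
    have : (11:ℝ) ≤ (k:ℝ) := by exact_mod_cast hk11
    linarith
  have he3 : Real.exp 1 ≤ 3 := by
    have := Real.exp_one_lt_d9
    linarith
  have hepos : (0:ℝ) < Real.exp 1 := Real.exp_pos 1
  -- Step 1: factorial bound
  have hfac : ((Nat.factorial (2 * k)):ℝ) ≤ (2 * (k:ℝ)) ^ (2 * k) := by
    have := Nat.factorial_le_pow (2 * k)
    calc ((Nat.factorial (2 * k)):ℝ) ≤ (((2 * k) ^ (2 * k) : ℕ) : ℝ) := by exact_mod_cast this
      _ = (2 * (k:ℝ)) ^ (2 * k) := by push_cast; ring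
  -- Step 2: reduce to (e k / α)^k
  have hexpk : Real.exp (k : ℕ) = Real.exp 1 ^ k := by
    rw [← Real.exp_nat_mul, mul_one]
  have hden_pos : (0:ℝ) < (2 * (k:ℝ)) ^ k * (4 * α) ^ k := by positivity
  have step2 : (2:ℝ) ^ (k + 2) * (Nat.factorial (2 * k)) * Real.exp (k : ℕ) /
      ((2 * (k:ℝ)) ^ k * (4 * α) ^ k) ≤ 4 * (Real.exp 1 * k / α) ^ k := by
    have h1 : (2:ℝ) ^ (k + 2) * (Nat.factorial (2 * k)) * Real.exp (k : ℕ)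
        ≤ (2:ℝ) ^ (k + 2) * ((2 * (k:ℝ)) ^ (2 * k)) * Real.exp 1 ^ k := by
      rw [hexpk]
      have h2pos : (0:ℝ) ≤ (2:ℝ) ^ (k + 2) := by positivity
      have hexppos : (0:ℝ) ≤ Real.exp 1 ^ k := by positivity
      nlinarith [mul_le_mul_of_nonneg_left hfac h2pos,
        mul_le_mul_of_nonneg_right
          (mul_le_mul_of_nonneg_left hfac h2pos) hexppos]
    have h2 : (2:ℝ) ^ (k + 2) * ((2 * (k:ℝ)) ^ (2 * k)) * Real.exp 1 ^ k /
        ((2 * (k:ℝ)) ^ k * (4 * α) ^ k) = 4 * (Real.exp 1 * k / α) ^ k := by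
      have hh1 : (2*(k:ℝ))^k ≠ 0 := by positivity
      have hh2 : (4*α:ℝ)^k ≠ 0 := by positivity
      have hh3 : (α:ℝ)^k ≠ 0 := by positivity
      have hh4 : (4:ℝ)^k = 2^k * 2^k := by rw [show (4:ℝ) = 2*2 by norm_num, mul_pow]
      rw [two_mul k, pow_add]
      field_simp
      rw [div_pow, mul_pow (k:ℝ) (Real.exp 1), mul_pow 2 (k:ℝ), mul_pow 4 α, hh4]
      field_simp
      ring
    calc (2:ℝ) ^ (k + 2) * (Nat.factorial (2 * k)) * Real.exp (k : ℕ) /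
        ((2 * (k:ℝ)) ^ k * (4 * α) ^ k)
        ≤ (2:ℝ) ^ (k + 2) * ((2 * (k:ℝ)) ^ (2 * k)) * Real.exp 1 ^ k /
        ((2 * (k:ℝ)) ^ k * (4 * α) ^ k) := by
          gcongr
      _ = 4 * (Real.exp 1 * k / α) ^ k := h2
  -- Step 3: base ≤ 1/2
  have step3 : (Real.exp 1 * k / α) ^ k ≤ (1/2:ℝ) ^ k := by
    refine pow_le_pow_left₀ (by positivity) ?_ k
    rw [div_le_iff₀ hαpos]
    nlinarith
  -- Step 4: (1/2)^k ≤ 2 exp(-(log 2/6) α)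
  have hlog2pos : (0:ℝ) < Real.log 2 := Real.log_pos (by norm_num)
  have step4 : (1/2:ℝ) ^ k ≤ 2 * Real.exp (-(Real.log 2 / 6) * α) := by
    have h1 : (1/2:ℝ) ^ k = Real.exp (-((k:ℝ) * Real.log 2)) := by
      rw [Real.exp_neg, Real.exp_nat_mul, Real.exp_log (by norm_num : (0:ℝ) < 2),
        one_div, inv_pow]
    have h2 : -((k:ℝ) * Real.log 2) ≤ Real.log 2 + (-(Real.log 2 / 6) * α) := by
      have : α/6 - 1 ≤ (k:ℝ) := by linarith
      nlinarith
    rw [h1]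
    calc Real.exp (-((k:ℝ) * Real.log 2))
        ≤ Real.exp (Real.log 2 + (-(Real.log 2 / 6) * α)) := Real.exp_le_exp.2 h2
      _ = 2 * Real.exp (-(Real.log 2 / 6) * α) := by
          rw [Real.exp_add, Real.exp_log (by norm_num : (0:ℝ) < 2)]
  -- Step 5: conclude
  set C₁ : ℝ := 2 / (9 * Real.pi ^ 3 * Real.log 2) with hC1
  have hπ : (3:ℝ) < Real.pi := Real.pi_gt_three
  have hπ3 : (27:ℝ) ≤ Real.pi ^ 3 := by
    calc (27:ℝ) = 3 ^ 3 := by norm_num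
      _ ≤ Real.pi ^ 3 := pow_le_pow_left₀ (by norm_num) hπ.le 3
  have hlog : (0.6931471803:ℝ) < Real.log 2 := Real.log_two_gt_d9
  have hden168 : (168:ℝ) ≤ 9 * Real.pi ^ 3 * Real.log 2 := by nlinarith
  have hC1small : C₁ ≤ 2/168 := by
    rw [hC1]
    exact div_le_div_of_nonneg_left (by norm_num) (by norm_num) hden168
  have hdiff : (1/20:ℝ) ≤ Real.log 2 / 6 - C₁ := by
    have : (0.6931471803:ℝ)/6 ≤ Real.log 2 / 6 := by linarith
    nlinarith
  have hfour : (4:ℝ) ≤ Real.exp ((Real.log 2 / 6 - C₁) * α) := by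
    have h1 : (3.3:ℝ) ≤ (Real.log 2 / 6 - C₁) * α := by nlinarith
    have := Real.add_one_le_exp ((Real.log 2 / 6 - C₁) * α)
    linarith
  have step5 : 4 * (2 * Real.exp (-(Real.log 2 / 6) * α))
      ≤ 2 * Real.exp (-C₁ * α) := by
    have h1 : 4 * Real.exp (-(Real.log 2 / 6) * α)
        ≤ Real.exp ((Real.log 2 / 6 - C₁) * α) * Real.exp (-(Real.log 2 / 6) * α) :=
      mul_le_mul_of_nonneg_right hfour (Real.exp_pos _).le
    have h2 : Real.exp ((Real.log 2 / 6 - C₁) * α) * Real.exp (-(Real.log 2 / 6) * α)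
        = Real.exp (-C₁ * α) := by
      rw [← Real.exp_add]
      ring_nf
    linarith [h1, h2]
  -- combine
  calc (2:ℝ) ^ (k + 2) * (Nat.factorial (2 * k)) * Real.exp (k : ℕ) /
      ((2 * (k:ℝ)) ^ k * (4 * α) ^ k)
      ≤ 4 * (Real.exp 1 * k / α) ^ k := step2
    _ ≤ 4 * (1/2:ℝ) ^ k := by linarith [step3]
    _ ≤ 4 * (2 * Real.exp (-(Real.log 2 / 6) * α)) := by linarith [step4]
    _ ≤ 2 * Real.exp (-C₁ * α) := step5

/-- **Lemma S3.** For the unitarily invariant probability measure `σ` on the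
unit sphere of `ℂ^D`, a fixed unit vector `v`, and any `α ≥ 1`,
`σ{ψ : |⟨v,ψ⟩|² ≥ 4α/D} ≤ 2 exp(−C₁ α)` with `C₁ = 2/(9π³ ln 2)`. -/
theorem tail_bound_haar_overlap (D : ℕ) (hD : 1 ≤ D)
    [MeasurableSpace (EuclideanSpace ℂ (Fin D))]
    [BorelSpace (EuclideanSpace ℂ (Fin D))]
    (σ : Measure (EuclideanSpace ℂ (Fin D))) [IsProbabilityMeasure σ]
    (hsupp : σ (Metric.sphere (0 : EuclideanSpace ℂ (Fin D)) 1) = 1)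
    (hinv : ∀ U : EuclideanSpace ℂ (Fin D) ≃ₗᵢ[ℂ] EuclideanSpace ℂ (Fin D),
      σ.map U = σ)
    (v : EuclideanSpace ℂ (Fin D)) (hv : ‖v‖ = 1)
    (α : ℝ) (hα : 1 ≤ α) :
    (σ {ψ | 4 * α / D ≤ ‖⟪v, ψ⟫‖ ^ 2}).toReal ≤
      2 * Real.exp (-(2 / (9 * Real.pi ^ 3 * Real.log 2)) * α) := by
  classical
  by_cases hα66 : α ≤ 66
  · -- trivial branch
    refine le_trans ?_ (final_numeric_trivial α hα hα66)
    have h1 : σ {ψ | 4 * α / D ≤ ‖⟪v, ψ⟫‖ ^ 2} ≤ 1 := prob_le_one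
    exact ENNReal.toReal_le_of_le_ofReal (by norm_num) (by simpa using h1)
  · -- main branch
    push_neg at hα66
    have hα66' : (66:ℝ) ≤ α := hα66.le
    have hDpos : (0:ℝ) < D := by exact_mod_cast hD
    set k := ⌊α/6⌋₊ with hkdef
    have hk1 : 1 ≤ k := Nat.le_floor (by push_cast; linarith)
    -- measurability
    have hmeas : ∀ w : EuclideanSpace ℂ (Fin D),
        Measurable (fun ψ : EuclideanSpace ℂ (Fin D) =>
          ENNReal.ofReal (‖⟪w, ψ⟫‖ ^ (2 * k))) := by
      intro w
      exact ENNReal.measurable_ofReal.comp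
        (((continuous_const.inner continuous_id).norm.pow (2 * k)).measurable)
    -- invariance
    have hinv' : ∀ w : EuclideanSpace ℂ (Fin D), ‖w‖ = 1 →
        ∫⁻ ψ, ENNReal.ofReal (‖⟪w, ψ⟫‖ ^ (2 * k)) ∂σ
          = ∫⁻ ψ, ENNReal.ofReal (‖⟪v, ψ⟫‖ ^ (2 * k)) ∂σ := by
      intro w hw
      obtain ⟨U, hU⟩ := exists_unitary_map D hD v w hv hw
      have hUm : Measurable U := U.continuous.measurable
      conv_lhs => rw [← hinv U]
      rw [lintegral_map (hmeas w) hUm]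
      refine lintegral_congr fun ψ => ?_
      rw [← hU, LinearIsometryEquiv.inner_map_map]
    -- a.e. on the sphere
    have hsph : ∀ᵐ ψ ∂σ, ‖ψ‖ = 1 := by
      have hms : MeasurableSet (Metric.sphere (0 : EuclideanSpace ℂ (Fin D)) 1) :=
        Metric.isClosed_sphere.measurableSet
      have h0 : σ (Metric.sphere (0 : EuclideanSpace ℂ (Fin D)) 1)ᶜ = 0 := by
        rw [measure_compl hms (measure_ne_top σ _), hsupp, measure_univ, tsub_self]
      filter_upwards [MeasureTheory.mem_ae_iff.mpr h0] with ψ hψ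
      simpa [mem_sphere_zero_iff_norm] using hψ
    -- the sign vectors
    set w : (Fin D → Bool) → EuclideanSpace ℂ (Fin D) :=
      fun ε => WithLp.toLp 2 (fun i => ((rsgn (ε i) / Real.sqrt D : ℝ) : ℂ)) with hwdef
    have hsqrtD : (0:ℝ) < Real.sqrt D := Real.sqrt_pos.2 hDpos
    have hwnorm : ∀ ε, ‖w ε‖ = 1 := by
      intro ε
      rw [EuclideanSpace.norm_eq]
      have h1 : ∀ i, ‖w ε i‖ ^ 2 = 1 / D := by
        intro i
        rw [hwdef]
        simp only [PiLp.toLp_apply, Complex.norm_real, Real.norm_eq_abs, sq_abs]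
        rw [div_pow, rsgn_sq, Real.sq_sqrt hDpos.le]
      rw [Finset.sum_congr rfl fun i _ => h1 i]
      rw [Finset.sum_const, Finset.card_univ, Fintype.card_fin, nsmul_eq_mul]
      rw [mul_one_div, div_self (ne_of_gt hDpos), Real.sqrt_one]
    -- inner product with sign vectors
    have hinner : ∀ ε ψ, ⟪w ε, ψ⟫
        = ((Real.sqrt D : ℝ) : ℂ)⁻¹ * ∑ i, (rsgn (ε i) : ℂ) * ψ i := by
      intro ε ψ
      rw [PiLp.inner_apply, Finset.mul_sum]
      refine Finset.sum_congr rfl fun i _ => ?_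
      rw [hwdef]
      simp only [PiLp.toLp_apply, RCLike.inner_apply, starRingEnd_apply]
      rw [← starRingEnd_apply, Complex.conj_ofReal, Complex.ofReal_div]
      rw [div_eq_inv_mul]
      ring
    have hnormpow : ∀ ε ψ, ‖⟪w ε, ψ⟫‖ ^ (2 * k)
        = (1 / (D:ℝ)) ^ k * ‖∑ i, (rsgn (ε i) : ℂ) * ψ i‖ ^ (2 * k) := by
      intro ε ψ
      rw [hinner, norm_mul, mul_pow, norm_inv, Complex.norm_real,
        Real.norm_eq_abs, abs_of_nonneg hsqrtD.le]
      congr 1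
      rw [pow_mul, inv_pow, Real.sq_sqrt hDpos.le, one_div]
    -- the moment bound
    set J := ∫⁻ ψ, ENNReal.ofReal (‖⟪v, ψ⟫‖ ^ (2 * k)) ∂σ with hJdef
    set K : ℝ := 2 ^ (k + 2) * (Nat.factorial (2 * k)) * Real.exp (k : ℕ) /
      ((2 * (k:ℝ)) ^ k * (D:ℝ) ^ k) with hKdef
    have hKnonneg : 0 ≤ K := by rw [hKdef]; positivity
    have hJK : J ≤ ENNReal.ofReal K := by
      have h2D : (2:ℝ≥0∞) ^ D * J
          = ∑ ε : Fin D → Bool, ∫⁻ ψ, ENNReal.ofReal (‖⟪w ε, ψ⟫‖ ^ (2 * k)) ∂σ := by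
        rw [Finset.sum_congr rfl fun ε _ => hinv' (w ε) (hwnorm ε)]
        rw [Finset.sum_const, Finset.card_univ]
        have : Fintype.card (Fin D → Bool) = 2 ^ D := by
          simp [Fintype.card_fun]
        rw [this, nsmul_eq_mul]
        push_cast
        ring
      have hsum : ∑ ε : Fin D → Bool, ∫⁻ ψ, ENNReal.ofReal (‖⟪w ε, ψ⟫‖ ^ (2 * k)) ∂σ
          = ∫⁻ ψ, ∑ ε : Fin D → Bool, ENNReal.ofReal (‖⟪w ε, ψ⟫‖ ^ (2 * k)) ∂σ :=
        (lintegral_finset_sum _ fun ε _ => hmeas (w ε)).symm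
      have hptae : ∀ᵐ ψ ∂σ, ∑ ε : Fin D → Bool, ENNReal.ofReal (‖⟪w ε, ψ⟫‖ ^ (2 * k))
          ≤ ENNReal.ofReal (2 ^ D * K) := by
        filter_upwards [hsph] with ψ hψ
        rw [← ENNReal.ofReal_sum_of_nonneg (fun ε _ => by positivity)]
        apply ENNReal.ofReal_le_ofReal
        have hψ2 : ∑ i, ‖ψ i‖ ^ 2 ≤ 1 := by
          have h := EuclideanSpace.norm_eq ψ
          rw [hψ] at h
          have h2 : ∑ i, ‖ψ i‖ ^ 2 = 1 := by
            have hnn : (0:ℝ) ≤ ∑ i, ‖ψ i‖ ^ 2 :=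
              Finset.sum_nonneg fun i _ => sq_nonneg _
            nlinarith [Real.sq_sqrt hnn, h.symm]
          linarith
        calc ∑ ε : Fin D → Bool, ‖⟪w ε, ψ⟫‖ ^ (2 * k)
            = ∑ ε : Fin D → Bool,
                (1 / (D:ℝ)) ^ k * ‖∑ i, (rsgn (ε i) : ℂ) * ψ i‖ ^ (2 * k) :=
              Finset.sum_congr rfl fun ε _ => hnormpow ε ψ
          _ = (1 / (D:ℝ)) ^ k
                * ∑ ε : Fin D → Bool, ‖∑ i, (rsgn (ε i) : ℂ) * ψ i‖ ^ (2 * k) :=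
              (Finset.mul_sum _ _ _).symm
          _ ≤ (1 / (D:ℝ)) ^ k * (2 ^ D * (2 ^ (k + 2) * (Nat.factorial (2 * k))
                * Real.exp (k : ℕ) / (2 * (k:ℝ)) ^ k)) := by
              refine mul_le_mul_of_nonneg_left ?_ (by positivity)
              have := khintchine_complex (n := D) k hk1 (fun i => ψ i) hψ2
              convert this using 3
          _ = 2 ^ D * K := by
              rw [hKdef, one_div, inv_pow]
              field_simp
      have hchain : (2:ℝ≥0∞) ^ D * J ≤ (2:ℝ≥0∞) ^ D * ENNReal.ofReal K := by
        rw [h2D, hsum]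
        calc ∫⁻ ψ, ∑ ε : Fin D → Bool, ENNReal.ofReal (‖⟪w ε, ψ⟫‖ ^ (2 * k)) ∂σ
            ≤ ∫⁻ _ψ, ENNReal.ofReal (2 ^ D * K) ∂σ := lintegral_mono_ae hptae
          _ = ENNReal.ofReal (2 ^ D * K) := by
              rw [lintegral_const, measure_univ, mul_one]
          _ = (2:ℝ≥0∞) ^ D * ENNReal.ofReal K := by
              rw [ENNReal.ofReal_mul (by positivity)]
              congr 1
              rw [ENNReal.ofReal_pow (by norm_num)]
              norm_num
      exact (ENNReal.mul_le_mul_iff_right (by positivity) (by simp)).mp hchain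
    -- Markov
    set t : ℝ := 4 * α / D with htdef
    have htpos : 0 < t := by rw [htdef]; positivity
    have hsub : {ψ : EuclideanSpace ℂ (Fin D) | 4 * α / D ≤ ‖⟪v, ψ⟫‖ ^ 2}
        ⊆ {ψ : EuclideanSpace ℂ (Fin D) |
            ENNReal.ofReal (t ^ k) ≤ ENNReal.ofReal (‖⟪v, ψ⟫‖ ^ (2 * k))} := by
      intro ψ hψ
      simp only [Set.mem_setOf_eq] at hψ ⊢
      apply ENNReal.ofReal_le_ofReal
      calc t ^ k ≤ (‖⟪v, ψ⟫‖ ^ 2) ^ k := pow_le_pow_left₀ htpos.le hψ k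
        _ = ‖⟪v, ψ⟫‖ ^ (2 * k) := by rw [← pow_mul]
    have hmarkov : σ {ψ : EuclideanSpace ℂ (Fin D) | 4 * α / D ≤ ‖⟪v, ψ⟫‖ ^ 2}
        ≤ ENNReal.ofReal (K / t ^ k) := by
      calc σ {ψ : EuclideanSpace ℂ (Fin D) | 4 * α / D ≤ ‖⟪v, ψ⟫‖ ^ 2}
          ≤ σ {ψ : EuclideanSpace ℂ (Fin D) |
              ENNReal.ofReal (t ^ k) ≤ ENNReal.ofReal (‖⟪v, ψ⟫‖ ^ (2 * k))} :=
            measure_mono hsub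
        _ ≤ J / ENNReal.ofReal (t ^ k) := by
            exact meas_ge_le_lintegral_div (hmeas v).aemeasurable
              (ne_of_gt (ENNReal.ofReal_pos.2 (by positivity)))
              ENNReal.ofReal_ne_top
        _ ≤ ENNReal.ofReal K / ENNReal.ofReal (t ^ k) :=
            ENNReal.div_le_div_right hJK _
        _ = ENNReal.ofReal (K / t ^ k) :=
            (ENNReal.ofReal_div_of_pos (by positivity)).symm
    refine le_trans (ENNReal.toReal_le_of_le_ofReal (by positivity) hmarkov) ?_
    -- final numeric simplification
    have hKt : K / t ^ k = 2 ^ (k + 2) * (Nat.factorial (2 * k)) * Real.exp (k : ℕ) /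
        ((2 * (k:ℝ)) ^ k * (4 * α) ^ k) := by
      rw [hKdef, htdef, div_div]
      congr 1
      rw [mul_assoc, ← mul_pow]
      congr 2
      field_simp
    rw [hKt]
    exact final_numeric α hα66'
end

section
/- (Theorem 2, core tail bound for approximate designs, geometric-entanglement form.) Let d ≥ 2, N ≥ 1, t ≥ 1 be integers and ε ≥ 0. Let ν be a Borel probability measure on the unit sphere of the N-qudit Hilbert space (total dimension D = d^N) such that for every product state v, ∫ |⟨v, ψ⟩|^(2t) dν(ψ) ≤ (1+ε) · t! · (D−1)! / (t+D−1)!. Then for every real α > 0, the ν-probability that there exists a product state u with |⟨u, ψ⟩|² ≥ α/d^N is at most (1+ε) · exp(2·d·N·(ln N + 3)) · (4t/α)^t. -/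
open MeasureTheory
open scoped ComplexInnerProductSpace

open Metric Module Set
open scoped ENNReal

private lemma exists_sphere_net (E : Type*) [NormedAddCommGroup E] [NormedSpace ℝ E]
    [FiniteDimensional ℝ E] {δ : ℝ} (hδ : 0 < δ) :
    ∃ S : Finset E, (↑S : Set E) ⊆ sphere (0 : E) 1 ∧
      (S.card : ℝ) ≤ ((2 + δ) / δ) ^ (finrank ℝ E) ∧
      ∀ x ∈ sphere (0 : E) 1, ∃ y ∈ S, dist x y ≤ δ := by
  borelize E
  set n := finrank ℝ E with hn
  let μ : Measure E := (finBasis ℝ E).addHaar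
  haveI : μ.IsAddHaarMeasure := inferInstance
  set 𝒮 : Set (Set E) := {A | A ⊆ sphere (0 : E) 1 ∧ A.Pairwise fun x y => δ < dist x y} with h𝒮
  obtain ⟨M, hM⟩ := zorn_subset 𝒮 (by
    intro c hc hchain
    refine ⟨⋃₀ c, ⟨?_, ?_⟩, fun s hs => subset_sUnion_of_mem hs⟩
    · intro x hx; obtain ⟨a, hac, hxa⟩ := hx; exact (hc hac).1 hxa
    · intro x hx y hy hxy
      obtain ⟨a, hac, hxa⟩ := hx; obtain ⟨b', hbc, hyb⟩ := hy
      rcases hchain.total hac hbc with hab | hba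
      · exact (hc hbc).2 (hab hxa) hyb hxy
      · exact (hc hac).2 hxa (hba hyb) hxy)
  have hMsphere : M ⊆ sphere (0 : E) 1 := hM.prop.1
  have hMsep : M.Pairwise fun x y => δ < dist x y := hM.prop.2
  have hq : (0:ℝ) < (δ/2) ^ n := pow_pos (by linarith) n
  -- cardinality bound for finite subsets
  have key : ∀ F : Finset E, (↑F : Set E) ⊆ M → (F.card : ℝ) ≤ ((2 + δ) / δ) ^ n := by
    intro F hF
    have hdisj : (↑F : Set E).PairwiseDisjoint fun x => closedBall x (δ / 2) := by
      intro x hx y hy hxy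
      exact closedBall_disjoint_closedBall (by
        have := hMsep (hF hx) (hF hy) hxy; linarith)
    have hmeas : μ (⋃ x ∈ F, closedBall x (δ / 2)) = ∑ x ∈ F, μ (closedBall x (δ / 2)) :=
      measure_biUnion_finset hdisj fun x _ => measurableSet_closedBall
    have hsub : (⋃ x ∈ F, closedBall x (δ / 2)) ⊆ closedBall (0 : E) (1 + δ / 2) := by
      intro y hy
      simp only [mem_iUnion] at hy
      obtain ⟨x, hx, hyx⟩ := hy
      have hx1 : ‖x‖ = 1 := by simpa using hMsphere (hF hx)
      have htri : ‖y‖ ≤ dist y x + ‖x‖ := by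
        simpa [dist_zero_right] using dist_triangle y x (0 : E)
      simp only [mem_closedBall, dist_zero_right] at hyx ⊢
      rw [dist_comm] at htri
      rw [dist_comm] at hyx
      linarith
    have hineq : (F.card : ℝ≥0∞) * (ENNReal.ofReal ((δ/2) ^ n) * μ (ball 0 1)) ≤
        ENNReal.ofReal ((1 + δ/2) ^ n) * μ (ball 0 1) := by
      calc (F.card : ℝ≥0∞) * (ENNReal.ofReal ((δ/2) ^ n) * μ (ball 0 1))
          = ∑ x ∈ F, μ (closedBall x (δ / 2)) := by
            rw [Finset.sum_congr rfl fun x _ => Measure.addHaar_closedBall μ x (by linarith : (0:ℝ) ≤ δ/2),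
              Finset.sum_const, nsmul_eq_mul]
        _ = μ (⋃ x ∈ F, closedBall x (δ / 2)) := hmeas.symm
        _ ≤ μ (closedBall (0 : E) (1 + δ / 2)) := measure_mono hsub
        _ = _ := Measure.addHaar_closedBall μ 0 (by linarith)
    have hBpos : μ (ball (0:E) 1) ≠ 0 := (measure_ball_pos μ 0 one_pos).ne'
    have hBfin : μ (ball (0:E) 1) ≠ ⊤ := measure_ball_lt_top.ne
    rw [← mul_assoc] at hineq
    have h2 : (F.card : ℝ≥0∞) * ENNReal.ofReal ((δ/2) ^ n) ≤ ENNReal.ofReal ((1 + δ/2) ^ n) :=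
      (ENNReal.mul_le_mul_iff_left hBpos hBfin).mp (by
        simpa [mul_assoc] using hineq)
    -- transfer to ℝ
    have h3 : (F.card : ℝ) * (δ/2) ^ n ≤ (1 + δ/2) ^ n := by
      have := (ENNReal.ofReal_le_ofReal_iff (by positivity)).2 le_rfl
      rw [← ENNReal.ofReal_natCast F.card, ← ENNReal.ofReal_mul (by positivity)] at h2
      exact (ENNReal.ofReal_le_ofReal_iff (by positivity)).1 h2
    rw [div_pow, le_div_iff₀ (by positivity)]
    calc (F.card : ℝ) * δ ^ n = (F.card : ℝ) * (δ/2) ^ n * 2 ^ n := by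
          rw [mul_assoc, ← mul_pow]; ring_nf
      _ ≤ (1 + δ/2) ^ n * 2 ^ n := by
          have : (0:ℝ) ≤ 2 ^ n := by positivity
          nlinarith
      _ = (2 + δ) ^ n := by rw [← mul_pow]; ring_nf
  -- M is finite
  have hMfin : M.Finite := by
    by_contra hinf
    obtain ⟨F, hFM, hFcard⟩ :=
      Set.Infinite.exists_subset_card_eq hinf (⌈((2 + δ) / δ) ^ n⌉₊ + 1)
    have h1 := key F hFM
    rw [hFcard] at h1
    have h2 : ((2 + δ) / δ) ^ n ≤ (⌈((2 + δ) / δ) ^ n⌉₊ : ℝ) := Nat.le_ceil _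
    push_cast at h1
    linarith
  refine ⟨hMfin.toFinset, by simpa using hMsphere, by simpa using key hMfin.toFinset (by simp), ?_⟩
  intro x hx
  by_contra hcon
  push_neg at hcon
  have hxd : ∀ y ∈ M, δ < dist x y := fun y hy =>
    hcon y (by simpa using hy)
  have hxM : x ∉ M := fun hxM => absurd (hxd x hxM) (by simp [hδ.le, not_lt, dist_self])
  have hins : insert x M ∈ 𝒮 := by
    constructor
    · exact Set.insert_subset hx hMsphere
    · refine Set.Pairwise.insert hMsep ?_
      intro y hy hxy
      exact ⟨hxd y hy, by rw [dist_comm]; exact hxd y hy⟩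
  have := hM.2 hins (Set.subset_insert x M)
  exact hxM (this (Set.mem_insert x M))


/-- An `N`-qudit product state (local dimension `d`): a vector of the form
`u x = ∏ i, f i (x i)` where each local vector `f i : Fin d → ℂ` is a unit vector. -/
noncomputable def prodVec (d N : ℕ) (f : Fin N → EuclideanSpace ℂ (Fin d)) :
    EuclideanSpace ℂ (Fin N → Fin d) := WithLp.toLp 2 (fun x => ∏ i, f i (x i))

lemma sum_sq_norm {ι : Type*} [Fintype ι] (g : EuclideanSpace ℂ ι) :
    ∑ a, ‖g a‖ ^ 2 = ‖g‖ ^ 2 := by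
  rw [EuclideanSpace.norm_eq, Real.sq_sqrt (by positivity)]

lemma norm_eq_one_of_sum {ι : Type*} [Fintype ι] (g : EuclideanSpace ℂ ι)
    (h : ∑ a, ‖g a‖ ^ 2 = 1) : ‖g‖ = 1 := by
  have h2 : ‖g‖ ^ 2 = 1 := by rw [← sum_sq_norm]; exact h
  nlinarith [norm_nonneg g]

lemma isProductState_prodVec {d N : ℕ} (f : Fin N → EuclideanSpace ℂ (Fin d))
    (hf : ∀ i, ∑ a, ‖f i a‖ ^ 2 = 1) : IsProductState d N (prodVec d N f) :=
  ⟨fun i a => f i a, hf, fun x => rfl⟩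

set_option maxHeartbeats 1000000 in
lemma norm_prodVec {d N : ℕ} (f : Fin N → EuclideanSpace ℂ (Fin d))
    (hf : ∀ i, ∑ a, ‖f i a‖ ^ 2 = 1) : ‖prodVec d N f‖ = 1 := by
  apply norm_eq_one_of_sum
  have hx : ∀ x : Fin N → Fin d, ‖prodVec d N f x‖ ^ 2 = ∏ i, ‖f i (x i)‖ ^ 2 := by
    intro x
    show ‖∏ i, f i (x i)‖ ^ 2 = _
    rw [norm_prod, Finset.prod_pow]
  calc ∑ x, ‖prodVec d N f x‖ ^ 2 = ∑ x : Fin N → Fin d, ∏ i, ‖f i (x i)‖ ^ 2 :=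
        Finset.sum_congr rfl fun x _ => hx x
    _ = ∏ i, ∑ a, ‖f i a‖ ^ 2 := (Fintype.prod_sum (ι := Fin N) (κ := fun _ => Fin d) (fun i a => ‖f i a‖ ^ 2)).symm
    _ = 1 := Finset.prod_eq_one fun i _ => hf i

lemma norm_of_isProductState {d N : ℕ} {u : EuclideanSpace ℂ (Fin N → Fin d)}
    (hu : IsProductState d N u) : ‖u‖ = 1 := by
  obtain ⟨f, hf, hfx⟩ := hu
  have hu' : u = prodVec d N (fun i => WithLp.toLp 2 (f i)) := PiLp.ext hfx
  have := norm_prodVec (d := d) (N := N) (fun i => WithLp.toLp 2 (f i)) hf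
  rwa [← hu'] at this

lemma inner_step {d N : ℕ} (ψ : EuclideanSpace ℂ (Fin N → Fin d)) (Λ : ℝ)
    (hΛ0 : 0 ≤ Λ) (hΛ : ∀ p, IsProductState d N p → ‖⟪p, ψ⟫‖ ≤ Λ)
    (g g' : Fin N → EuclideanSpace ℂ (Fin d)) (j : Fin N)
    (hgg' : ∀ i, i ≠ j → g i = g' i) (hg : ∀ i, i ≠ j → ‖g i‖ = 1) :
    ‖⟪prodVec d N g, ψ⟫ - ⟪prodVec d N g', ψ⟫‖ ≤ ‖g j - g' j‖ * Λ := by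
  classical
  set w : EuclideanSpace ℂ (Fin d) := g j - g' j with hw
  by_cases hw0 : w = 0
  · have : g = g' := by
      funext i
      by_cases hij : i = j
      · subst hij; exact sub_eq_zero.mp hw0
      · exact hgg' i hij
    rw [this, sub_self, norm_zero]
    positivity
  · set c : ℝ := ‖w‖ with hc
    have hc0 : 0 < c := norm_pos_iff.mpr hw0
    set p := prodVec d N (Function.update g j ((c : ℂ)⁻¹ • w)) with hp
    have hpunit : ∀ i, ∑ a, ‖Function.update g j ((c : ℂ)⁻¹ • w) i a‖ ^ 2 = 1 := by
      intro i
      rw [sum_sq_norm]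
      by_cases hij : i = j
      · subst hij
        rw [Function.update_self, norm_smul]
        simp only [norm_inv, Complex.norm_real, Real.norm_eq_abs]
        rw [abs_of_pos hc0]
        field_simp
        rfl
      · rw [Function.update_of_ne hij]
        rw [hg i hij]; norm_num
    have hdiff : prodVec d N g - prodVec d N g' = (c : ℂ) • p := by
      ext x
      have h1 : (prodVec d N g - prodVec d N g') x = prodVec d N g x - prodVec d N g' x := rfl
      have h2 : ((c : ℂ) • p) x = (c : ℂ) * p x := rfl
      rw [h1, h2]
      show (∏ i, g i (x i)) - (∏ i, g' i (x i)) =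
        (c : ℂ) * ∏ i, Function.update g j ((c : ℂ)⁻¹ • w) i (x i)
      rw [← Finset.mul_prod_erase Finset.univ (fun i => g i (x i)) (Finset.mem_univ j),
        ← Finset.mul_prod_erase Finset.univ (fun i => g' i (x i)) (Finset.mem_univ j),
        ← Finset.mul_prod_erase Finset.univ
          (fun i => Function.update g j ((c : ℂ)⁻¹ • w) i (x i)) (Finset.mem_univ j)]
      have he1 : ∏ i ∈ Finset.univ.erase j, g' i (x i) = ∏ i ∈ Finset.univ.erase j, g i (x i) :=
        Finset.prod_congr rfl fun i hi => by
          rw [hgg' i (Finset.ne_of_mem_erase hi)]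
      have he2 : ∏ i ∈ Finset.univ.erase j, Function.update g j ((c : ℂ)⁻¹ • w) i (x i)
          = ∏ i ∈ Finset.univ.erase j, g i (x i) :=
        Finset.prod_congr rfl fun i hi => by
          rw [Function.update_of_ne (Finset.ne_of_mem_erase hi)]
      rw [he1, he2, Function.update_self]
      have hwx : ((c : ℂ)⁻¹ • w) (x j) = (c : ℂ)⁻¹ * w (x j) := rfl
      rw [hwx]
      have hcne : (c : ℂ) ≠ 0 := by exact_mod_cast hc0.ne'
      have hwxj : w (x j) = g j (x j) - g' j (x j) := rfl
      field_simp
      rw [hwxj]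
    calc ‖⟪prodVec d N g, ψ⟫ - ⟪prodVec d N g', ψ⟫‖
        = ‖⟪prodVec d N g - prodVec d N g', ψ⟫‖ := by rw [inner_sub_left]
      _ = ‖⟪(c : ℂ) • p, ψ⟫‖ := by rw [hdiff]
      _ = c * ‖⟪p, ψ⟫‖ := by
          rw [inner_smul_left, norm_mul, RCLike.norm_conj]
          simp [abs_of_pos hc0, Complex.norm_real]
      _ ≤ c * Λ := by
          have := hΛ p (isProductState_prodVec _ hpunit)
          exact mul_le_mul_of_nonneg_left this hc0.le

lemma inner_telescope {d N : ℕ} (hN : 0 < N) (ψ : EuclideanSpace ℂ (Fin N → Fin d)) (Λ : ℝ)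
    (hΛ0 : 0 ≤ Λ) (hΛ : ∀ p, IsProductState d N p → ‖⟪p, ψ⟫‖ ≤ Λ)
    (u v : Fin N → EuclideanSpace ℂ (Fin d)) (hu : ∀ i, ‖u i‖ = 1) (hv : ∀ i, ‖v i‖ = 1)
    (δ : ℝ) (hd : ∀ i, ‖u i - v i‖ ≤ δ) :
    ‖⟪prodVec d N u, ψ⟫ - ⟪prodVec d N v, ψ⟫‖ ≤ N * δ * Λ := by
  have hδ0 : 0 ≤ δ := le_trans (norm_nonneg _) (hd ⟨0, hN⟩)
  have main : ∀ k : ℕ, k ≤ N →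
      ‖⟪prodVec d N u, ψ⟫ - ⟪prodVec d N (fun i => if (i : ℕ) < k then v i else u i), ψ⟫‖ ≤
        k * δ * Λ := by
    intro k
    induction k with
    | zero =>
      intro _
      have : (fun i : Fin N => if (i : ℕ) < 0 then v i else u i) = u := by
        funext i; simp
      rw [this, sub_self, norm_zero]
      simp
    | succ k ih =>
      intro hk1
      have hk : k < N := Nat.lt_of_succ_le hk1
      set j : Fin N := ⟨k, hk⟩ with hj
      set g : Fin N → EuclideanSpace ℂ (Fin d) := fun i => if (i : ℕ) < k then v i else u i
        with hgdef
      set g2 : Fin N → EuclideanSpace ℂ (Fin d) := fun i => if (i : ℕ) < k + 1 then v i else u i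
        with hg2def
      have hstep : ‖⟪prodVec d N g, ψ⟫ - ⟪prodVec d N g2, ψ⟫‖ ≤ ‖g j - g2 j‖ * Λ := by
        apply inner_step ψ Λ hΛ0 hΛ g g2 j
        · intro i hij
          have : (i : ℕ) < k + 1 ↔ (i : ℕ) < k := by
            constructor
            · intro h
              rcases Nat.lt_succ_iff_lt_or_eq.mp h with h' | h'
              · exact h'
              · exact absurd (Fin.ext h' : i = j) hij
            · exact fun h => Nat.lt_succ_of_lt h
          simp only [hgdef, hg2def, this]
        · intro i hij
          by_cases h : (i : ℕ) < k
          · simp only [hgdef, if_pos h]; exact hv i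
          · simp only [hgdef, if_neg h]; exact hu i
      have hjval : ‖g j - g2 j‖ ≤ δ := by
        have h1 : g j = u j := by simp [hgdef, hj]
        have h2 : g2 j = v j := by simp [hg2def, hj]
        rw [h1, h2]
        exact hd j
      calc ‖⟪prodVec d N u, ψ⟫ - ⟪prodVec d N g2, ψ⟫‖
          ≤ ‖⟪prodVec d N u, ψ⟫ - ⟪prodVec d N g, ψ⟫‖ +
            ‖⟪prodVec d N g, ψ⟫ - ⟪prodVec d N g2, ψ⟫‖ := by
            have := norm_sub_le_norm_sub_add_norm_sub (⟪prodVec d N u, ψ⟫)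
              (⟪prodVec d N g, ψ⟫) (⟪prodVec d N g2, ψ⟫)
            exact this
        _ ≤ k * δ * Λ + ‖g j - g2 j‖ * Λ := add_le_add (ih (Nat.le_of_lt hk)) hstep
        _ ≤ k * δ * Λ + δ * Λ := by
            have : ‖g j - g2 j‖ * Λ ≤ δ * Λ := mul_le_mul_of_nonneg_right hjval hΛ0
            linarith
        _ = (k + 1 : ℕ) * δ * Λ := by push_cast; ring
  have hfin := main N le_rfl
  have : (fun i : Fin N => if (i : ℕ) < N then v i else u i) = v := by
    funext i; simp [i.isLt]
  rwa [this] at hfin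


set_option maxHeartbeats 2000000 in
/-- **Theorem 2, core tail bound for approximate designs.** If a Borel
probability measure `ν` on the unit sphere of the `N`-qudit space satisfies the `t`-design
overlap-moment bound `∫ |⟨v,ψ⟩|^(2t) dν ≤ (1+ε) t!(D−1)!/(t+D−1)!` (`D = dᴺ`) for every
product state `v`, then for every `α > 0` the `ν`-probability that some product state `u`
has `|⟨u,ψ⟩|² ≥ α/dᴺ` is at most `(1+ε) exp(2dN(ln N+3)) (4t/α)^t`. -/
theorem design_geometric_entanglement_tail (d N t : ℕ) (hd : 2 ≤ d) (hN : 1 ≤ N)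
    (ht : 1 ≤ t) (ε : ℝ) (hε : 0 ≤ ε)
    [MeasurableSpace (EuclideanSpace ℂ (Fin N → Fin d))]
    [BorelSpace (EuclideanSpace ℂ (Fin N → Fin d))]
    (ν : Measure (EuclideanSpace ℂ (Fin N → Fin d))) [IsProbabilityMeasure ν]
    (hsupp : ν (Metric.sphere (0 : EuclideanSpace ℂ (Fin N → Fin d)) 1) = 1)
    (hmom : ∀ v : EuclideanSpace ℂ (Fin N → Fin d), IsProductState d N v →
      ∫ ψ, ‖⟪v, ψ⟫‖ ^ (2 * t) ∂ν ≤
        (1 + ε) * ((t.factorial : ℝ) * (d ^ N - 1).factorial) /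
          ((t + d ^ N - 1).factorial : ℝ))
    (α : ℝ) (hα : 0 < α) :
    (ν {ψ | ∃ u, IsProductState d N u ∧ α / (d : ℝ) ^ N ≤ ‖⟪u, ψ⟫‖ ^ 2}).toReal ≤
      (1 + ε) * Real.exp (2 * d * N * (Real.log N + 3)) * (4 * t / α) ^ t := by
  classical
  let H := EuclideanSpace ℂ (Fin N → Fin d)
  let E := EuclideanSpace ℂ (Fin d)
  set X : Set H := {ψ | ∃ u, IsProductState d N u ∧ α / (d : ℝ) ^ N ≤ ‖⟪u, ψ⟫‖ ^ 2} with hX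
  have hdN : (0:ℝ) < (d : ℝ) ^ N := by positivity
  set Dr : ℝ := (d : ℝ) ^ N with hDr
  set s : ℝ := Real.sqrt (α / Dr) with hs
  have hs0 : 0 < s := Real.sqrt_pos.mpr (by positivity)
  have hssq : s ^ 2 = α / Dr := Real.sq_sqrt (by positivity)
  have hNR : (0:ℝ) < N := by exact_mod_cast hN
  set δ : ℝ := 1 / (2 * N) with hδdef
  have hδ0 : 0 < δ := by positivity
  obtain ⟨S, hSs, hScard, hScov⟩ := exists_sphere_net E hδ0
  have hrank : finrank ℝ E = 2 * d := by
    have h1 : finrank ℝ ℂ * finrank ℂ E = finrank ℝ E := finrank_mul_finrank ℝ ℂ E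
    have h2 : finrank ℂ E = d := by
      rw [show finrank ℂ E = finrank ℂ (EuclideanSpace ℂ (Fin d)) from rfl,
        finrank_euclideanSpace, Fintype.card_fin]
    rw [← h1, Complex.finrank_real_complex, h2]
  rw [hrank] at hScard
  have hSunit : ∀ y ∈ S, ‖y‖ = 1 := fun y hy => mem_sphere_zero_iff_norm.mp (hSs hy)
  -- the finite family of net product states
  set T : Finset (Fin N → E) := Fintype.piFinset (fun _ => S) with hT
  have hTcard : T.card = S.card ^ N := by
    rw [hT, Fintype.card_piFinset]
    simp
  have hSne : S.Nonempty := by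
    haveI : Nonempty (Fin d) := ⟨⟨0, by omega⟩⟩
    have hsph : (Metric.sphere (0 : E) 1).Nonempty := NormedSpace.sphere_nonempty.mpr zero_le_one
    obtain ⟨x, hx⟩ := hsph
    obtain ⟨y, hy, -⟩ := hScov x hx
    exact ⟨y, hy⟩
  have hTne : T.Nonempty := by
    obtain ⟨y, hy⟩ := hSne
    exact ⟨fun _ => y, Fintype.mem_piFinset.mpr fun _ => hy⟩
  set A : (Fin N → E) → Set H := fun h => {ψ | s / 2 ≤ ‖⟪prodVec d N h, ψ⟫‖} with hA
  -- inclusion in the union over the net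
  have hincl : X ⊆ (⋃ h ∈ T, A h) ∪ (Metric.sphere (0 : H) 1)ᶜ := by
    intro ψ hψ
    by_cases hψs : ψ ∈ Metric.sphere (0 : H) 1
    swap
    · exact Or.inr hψs
    left
    obtain ⟨u₀, hu₀, hu₀α⟩ := hψ
    have hψn : ‖ψ‖ = 1 := mem_sphere_zero_iff_norm.mp hψs
    set Q : Set ℝ := {r | ∃ u, IsProductState d N u ∧ r = ‖⟪u, ψ⟫‖} with hQ
    have hQne : Q.Nonempty := ⟨_, u₀, hu₀, rfl⟩
    have hQbdd : BddAbove Q := by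
      refine ⟨1, ?_⟩
      rintro r ⟨u, hu, rfl⟩
      calc ‖⟪u, ψ⟫‖ ≤ ‖u‖ * ‖ψ‖ := norm_inner_le_norm u ψ
        _ = 1 := by rw [norm_of_isProductState hu, hψn, one_mul]
    set Λ : ℝ := sSup Q with hΛ
    have hΛub : ∀ p, IsProductState d N p → ‖⟪p, ψ⟫‖ ≤ Λ := fun p hp =>
      le_csSup hQbdd ⟨p, hp, rfl⟩
    have hΛs : s ≤ Λ := by
      have h1 : s ≤ ‖⟪u₀, ψ⟫‖ := by
        rw [hs]
        calc Real.sqrt (α / Dr) ≤ Real.sqrt (‖⟪u₀, ψ⟫‖ ^ 2) := Real.sqrt_le_sqrt hu₀α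
          _ = ‖⟪u₀, ψ⟫‖ := Real.sqrt_sq (norm_nonneg _)
      exact h1.trans (hΛub u₀ hu₀)
    have hΛ0 : 0 ≤ Λ := le_trans hs0.le hΛs
    set m : ℝ := T.sup' hTne (fun h => ‖⟪prodVec d N h, ψ⟫‖) with hm
    have hclaim : Λ ≤ m + Λ / 2 := by
      apply csSup_le hQne
      rintro r ⟨u, hu, rfl⟩
      obtain ⟨f, hf, hfx⟩ := hu
      set uf : Fin N → E := fun i => WithLp.toLp 2 (f i) with huf
      have hueq : u = prodVec d N uf := PiLp.ext hfx
      have hufu : ∀ i, ‖uf i‖ = 1 := fun i => norm_eq_one_of_sum _ (hf i)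
      have hcov : ∀ i, ∃ y ∈ S, dist (uf i) y ≤ δ := fun i =>
        hScov (uf i) (mem_sphere_zero_iff_norm.mpr (hufu i))
      choose y hyS hyd using hcov
      have hyT : y ∈ T := Fintype.mem_piFinset.mpr hyS
      have hyu : ∀ i, ‖y i‖ = 1 := fun i => hSunit _ (hyS i)
      have htel : ‖⟪prodVec d N uf, ψ⟫ - ⟪prodVec d N y, ψ⟫‖ ≤ N * δ * Λ := by
        apply inner_telescope (by omega) ψ Λ hΛ0 hΛub uf y hufu hyu δ
        intro i
        rw [← dist_eq_norm]
        exact hyd i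
      have hNδ : (N : ℝ) * δ * Λ = Λ / 2 := by
        rw [hδdef]
        field_simp
      rw [hNδ] at htel
      have h1 : ‖⟪u, ψ⟫‖ ≤ ‖⟪prodVec d N y, ψ⟫‖ + Λ / 2 := by
        rw [hueq]
        calc ‖⟪prodVec d N uf, ψ⟫‖
            ≤ ‖⟪prodVec d N y, ψ⟫‖ + ‖⟪prodVec d N uf, ψ⟫ - ⟪prodVec d N y, ψ⟫‖ := by
              exact norm_le_norm_add_norm_sub' _ _
          _ ≤ ‖⟪prodVec d N y, ψ⟫‖ + Λ / 2 := by linarith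
      refine h1.trans (add_le_add_left ?_ _)
      exact Finset.le_sup' (fun h => ‖⟪prodVec d N h, ψ⟫‖) hyT
    have hms : s / 2 ≤ m := by linarith
    obtain ⟨h₀, hh₀T, hh₀⟩ := Finset.exists_mem_eq_sup' hTne (fun h => ‖⟪prodVec d N h, ψ⟫‖)
    refine Set.mem_biUnion hh₀T ?_
    show s / 2 ≤ ‖⟪prodVec d N h₀, ψ⟫‖
    rw [← hh₀]
    exact hms
  -- the moment bound constant
  set Mom : ℝ := (1 + ε) * ((t.factorial : ℝ) * (d ^ N - 1).factorial) /
      ((t + d ^ N - 1).factorial : ℝ) with hMom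
  have hMom0 : 0 ≤ Mom := by
    rw [hMom]
    positivity
  set c : ℝ := (s / 2) ^ (2 * t) with hc
  have hc0 : 0 < c := by positivity
  -- Markov bound for each net state
  have hAh : ∀ h ∈ T, ν (A h) ≤ ENNReal.ofReal (Mom / c) := by
    intro h hhT
    set v : H := prodVec d N h with hv
    have hvunit : ∀ i, ‖h i‖ = 1 := fun i => hSunit _ (Fintype.mem_piFinset.mp hhT i)
    have hvps : IsProductState d N v := isProductState_prodVec h (fun i => by
      rw [sum_sq_norm, hvunit i, one_pow])
    set f : H → ℝ := fun ψ => ‖⟪v, ψ⟫‖ ^ (2 * t) with hf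
    have hfc : Continuous f := ((innerSL ℂ v).continuous.norm).pow _
    have hae : ∀ᵐ ψ ∂ν, ψ ∈ Metric.sphere (0 : H) 1 := by
      rw [MeasureTheory.ae_iff]
      have : {ψ : H | ¬ ψ ∈ Metric.sphere (0 : H) 1} = (Metric.sphere (0 : H) 1)ᶜ := rfl
      rw [this, measure_compl (Metric.isClosed_sphere.measurableSet) (measure_ne_top ν _),
        hsupp, measure_univ, tsub_self]
    have hbound : ∀ᵐ ψ ∂ν, ‖f ψ‖ ≤ 1 := by
      refine hae.mono fun ψ hψ => ?_
      have h1 : ‖⟪v, ψ⟫‖ ≤ 1 := by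
        calc ‖⟪v, ψ⟫‖ ≤ ‖v‖ * ‖ψ‖ := norm_inner_le_norm v ψ
          _ = 1 := by
            rw [norm_of_isProductState hvps, mem_sphere_zero_iff_norm.mp hψ, one_mul]
      rw [hf, Real.norm_eq_abs, abs_of_nonneg (by positivity)]
      exact pow_le_one₀ (norm_nonneg _) h1
    have hint : Integrable f ν :=
      Integrable.mono' (integrable_const 1) hfc.aestronglyMeasurable hbound
    have hlin : ∫⁻ ψ, ENNReal.ofReal (f ψ) ∂ν = ENNReal.ofReal (∫ ψ, f ψ ∂ν) :=
      (ofReal_integral_eq_lintegral_ofReal hint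
        (Filter.Eventually.of_forall fun ψ => by positivity)).symm
    have hsubA : A h ⊆ {ψ : H | ENNReal.ofReal c ≤ ENNReal.ofReal (f ψ)} := by
      intro ψ hψ
      have h1 : s / 2 ≤ ‖⟪v, ψ⟫‖ := hψ
      have h2 : c ≤ f ψ := by
        rw [hc, hf]
        exact pow_le_pow_left₀ (by positivity) h1 _
      exact ENNReal.ofReal_le_ofReal h2
    have hmarkov := mul_meas_ge_le_lintegral₀
      ((ENNReal.measurable_ofReal.comp hfc.measurable).aemeasurable (μ := ν))
      (ENNReal.ofReal c)
    have h3 : ν (A h) ≤ ENNReal.ofReal (∫ ψ, f ψ ∂ν) / ENNReal.ofReal c := by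
      rw [← hlin]
      rw [ENNReal.le_div_iff_mul_le (Or.inl (ENNReal.ofReal_pos.mpr hc0).ne')
        (Or.inl ENNReal.ofReal_ne_top)]
      calc ν (A h) * ENNReal.ofReal c = ENNReal.ofReal c * ν (A h) := mul_comm _ _
        _ ≤ ENNReal.ofReal c * ν {ψ : H | ENNReal.ofReal c ≤ ENNReal.ofReal (f ψ)} := by
            exact mul_le_mul_right (measure_mono hsubA) _
        _ ≤ ∫⁻ ψ, ENNReal.ofReal (f ψ) ∂ν := hmarkov
    have h4 : ∫ ψ, f ψ ∂ν ≤ Mom := hmom v hvps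
    calc ν (A h) ≤ ENNReal.ofReal (∫ ψ, f ψ ∂ν) / ENNReal.ofReal c := h3
      _ ≤ ENNReal.ofReal Mom / ENNReal.ofReal c :=
          ENNReal.div_le_div_right (ENNReal.ofReal_le_ofReal h4) _
      _ = ENNReal.ofReal (Mom / c) := (ENNReal.ofReal_div_of_pos hc0).symm
  -- assemble the measure bound
  have hcompl : ν ((Metric.sphere (0 : H) 1)ᶜ) = 0 := by
    rw [measure_compl (Metric.isClosed_sphere.measurableSet) (measure_ne_top ν _),
      hsupp, measure_univ, tsub_self]
  have hνX : ν X ≤ ENNReal.ofReal ((T.card : ℝ) * (Mom / c)) := by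
    calc ν X ≤ ν ((⋃ h ∈ T, A h) ∪ (Metric.sphere (0 : H) 1)ᶜ) := measure_mono hincl
      _ ≤ ν (⋃ h ∈ T, A h) + ν ((Metric.sphere (0 : H) 1)ᶜ) := measure_union_le _ _
      _ = ν (⋃ h ∈ T, A h) := by rw [hcompl, add_zero]
      _ ≤ ∑ h ∈ T, ν (A h) := measure_biUnion_finset_le T A
      _ ≤ ∑ _h ∈ T, ENNReal.ofReal (Mom / c) := Finset.sum_le_sum hAh
      _ = (T.card : ℝ≥0∞) * ENNReal.ofReal (Mom / c) := by
          rw [Finset.sum_const, nsmul_eq_mul]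
      _ = ENNReal.ofReal ((T.card : ℝ) * (Mom / c)) := by
          rw [ENNReal.ofReal_mul (by positivity), ENNReal.ofReal_natCast]
  -- final real arithmetic
  have hfinal : (T.card : ℝ) * (Mom / c) ≤
      (1 + ε) * Real.exp (2 * d * N * (Real.log N + 3)) * (4 * t / α) ^ t := by
    have hD1 : 1 ≤ d ^ N := Nat.one_le_pow _ _ (by omega)
    -- value of c
    have hcval : c = (α / (4 * Dr)) ^ t := by
      rw [hc, pow_mul]
      congr 1
      rw [div_pow, hssq]
      norm_num
      rw [div_div, mul_comm]
    -- the factorial bound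
    have hnat : t.factorial * (d ^ N - 1).factorial * (d ^ N) ^ t ≤
        t ^ t * (t + d ^ N - 1).factorial := by
      have he : t + d ^ N - 1 = (d ^ N - 1) + t := by omega
      have he2 : (d ^ N - 1) + 1 = d ^ N := by omega
      rw [he, ← Nat.factorial_mul_ascFactorial (d ^ N - 1) t, he2]
      calc t.factorial * (d ^ N - 1).factorial * (d ^ N) ^ t
          = (t.factorial * (d ^ N) ^ t) * (d ^ N - 1).factorial := by ring
        _ ≤ (t ^ t * (d ^ N).ascFactorial t) * (d ^ N - 1).factorial :=
            Nat.mul_le_mul_right _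
              (Nat.mul_le_mul (Nat.factorial_le_pow t) (Nat.pow_succ_le_ascFactorial _ t))
        _ = t ^ t * ((d ^ N - 1).factorial * (d ^ N).ascFactorial t) := by ring
    have hDt0 : (0:ℝ) < ((t + d ^ N - 1).factorial : ℝ) := by
      exact_mod_cast Nat.factorial_pos _
    have hDrD : Dr = ((d ^ N : ℕ) : ℝ) := by rw [hDr]; push_cast; ring
    have hkey : (t.factorial : ℝ) * ((d ^ N - 1).factorial : ℝ) /
        ((t + d ^ N - 1).factorial : ℝ) ≤ ((t : ℝ) / Dr) ^ t := by
      rw [div_pow, div_le_div_iff₀ hDt0 (by positivity)]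
      rw [hDrD]
      calc (t.factorial : ℝ) * ((d ^ N - 1).factorial : ℝ) * ((d ^ N : ℕ) : ℝ) ^ t
          = ((t.factorial * (d ^ N - 1).factorial * (d ^ N) ^ t : ℕ) : ℝ) := by push_cast; ring
        _ ≤ ((t ^ t * (t + d ^ N - 1).factorial : ℕ) : ℝ) := by exact_mod_cast hnat
        _ = (t : ℝ) ^ t * ((t + d ^ N - 1).factorial : ℝ) := by push_cast; ring
    -- step A : Mom / c ≤ (1+ε) (4t/α)^t
    have hrat : ((t : ℝ) / Dr) ^ t / c = (4 * t / α) ^ t := by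
      rw [hcval, ← div_pow]
      congr 1
      field_simp
    have hMomc : Mom / c = (1 + ε) * (((t.factorial : ℝ) * ((d ^ N - 1).factorial : ℝ) /
        ((t + d ^ N - 1).factorial : ℝ)) / c) := by
      rw [hMom]; ring
    have hstepA : Mom / c ≤ (1 + ε) * (4 * t / α) ^ t := by
      rw [hMomc, ← hrat]
      gcongr
    -- step B : card bound
    have hN1 : (1:ℝ) ≤ (N : ℝ) := by exact_mod_cast hN
    have hstepB : (T.card : ℝ) ≤ Real.exp (2 * d * N * (Real.log N + 3)) := by
      have h0 : (T.card : ℝ) = ((S.card : ℝ)) ^ N := by rw [hTcard]; push_cast; ring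
      have hδval : (2 + δ) / δ = 4 * N + 1 := by
        rw [hδdef]
        field_simp
        ring
      have h6N : (0:ℝ) < 6 * N := by linarith
      have hlog6 : Real.log 6 ≤ 3 := by
        rw [Real.log_le_iff_le_exp (by norm_num)]
        have he1 : (2:ℝ) ≤ Real.exp 1 := by linarith [Real.add_one_le_exp 1]
        have h3 : Real.exp 3 = Real.exp 1 ^ 3 := by
          rw [← Real.exp_nat_mul]; norm_num
        have h8 : (2:ℝ) ^ 3 ≤ Real.exp 1 ^ 3 := pow_le_pow_left₀ (by norm_num) he1 3
        rw [h3]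
        norm_num at h8
        linarith
      calc (T.card : ℝ) = ((S.card : ℝ)) ^ N := h0
        _ ≤ (((2 + δ) / δ) ^ (2 * d)) ^ N :=
            pow_le_pow_left₀ (by positivity) hScard N
        _ = ((2 + δ) / δ) ^ (2 * d * N) := by rw [← pow_mul]
        _ ≤ (6 * N) ^ (2 * d * N) := by
            apply pow_le_pow_left₀ (by positivity)
            rw [hδval]; linarith
        _ = Real.exp ((2 * d * N : ℕ) * Real.log (6 * N)) := by
            rw [Real.exp_nat_mul, Real.exp_log h6N]
        _ ≤ Real.exp (2 * d * N * (Real.log N + 3)) := by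
            apply Real.exp_le_exp.mpr
            have hlogm : Real.log (6 * N) = Real.log 6 + Real.log N :=
              Real.log_mul (by norm_num) (by positivity)
            have hdN0 : (0:ℝ) ≤ ((2 * d * N : ℕ) : ℝ) := by positivity
            have hcast : ((2 * d * N : ℕ) : ℝ) = 2 * (d:ℝ) * N := by push_cast; ring
            rw [hcast, hlogm]
            nlinarith [Real.log_nonneg hN1, hdN, hNR]
    calc (T.card : ℝ) * (Mom / c)
        ≤ Real.exp (2 * d * N * (Real.log N + 3)) * ((1 + ε) * (4 * t / α) ^ t) :=
          mul_le_mul hstepB hstepA (by positivity) (Real.exp_nonneg _)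
      _ = (1 + ε) * Real.exp (2 * d * N * (Real.log N + 3)) * (4 * t / α) ^ t := by ring
  have hto : (ν X).toReal ≤ (T.card : ℝ) * (Mom / c) :=
    ENNReal.toReal_le_of_le_ofReal (by positivity) hνX
  exact hto.trans hfinal
end
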